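/- arXiv:2406.11166 — 2 statements merged into one kernel-verified Lean document; each statement's English description precedes it below -/
import Mathlib

section
/- Let ≻ be a hope-and-prepare preference with representation (u, C, D). Then (i) ≻ satisfies Axiom 8 if and only if D ⊆ C, and (ii) ≻ satisfies Axiom 9 if and only if C ⊆ D. Consequently, ≻ satisfies both Axiom 8 and Axiom 9 if and only if C = D, i.e. ≻ admits a concordant hope-and-prepare representation (u, C, C). -/
/-!
Framework: Anscombe–Aumann acts, finitely additive probability measures,
simple acts, hope-and-prepare preferences (Bastianello–Hill style setup).
-/

open Set

section Framework

variable (S : Type*) [MeasurableSpace S]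

/-- The measurable sets (events) of `S`, as a subtype. -/
abbrev MSet := {A : Set S // MeasurableSet A}

/-- Finitely additive probability measures on `(S, Σ)`, viewed as real-valued
set functions on events.  The weak* topology is the topology of pointwise
convergence on events, i.e. the product topology on `MSet S → ℝ`. -/
def ProbCharges : Set (MSet S → ℝ) :=
  {p | (∀ A, 0 ≤ p A) ∧ p ⟨Set.univ, MeasurableSet.univ⟩ = 1 ∧
    ∀ A B : MSet S, Disjoint A.1 B.1 → p ⟨A.1 ∪ B.1, A.2.union B.2⟩ = p A + p B}

end Framework

section Fns

variable {S : Type*} [MeasurableSpace S]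

/-- `φ : S → ℝ` is a measurable simple function (an element of `B₀(Σ)`). -/
def IsSimpleFn (φ : S → ℝ) : Prop :=
  (Set.range φ).Finite ∧ ∀ y : ℝ, MeasurableSet (φ ⁻¹' {y})

/-- The integral `∫ φ dp` of a simple function `φ` against a finitely additive
measure `p` (junk value `0` if `φ` is not simple). -/
noncomputable def fInt (p : MSet S → ℝ) (φ : S → ℝ) : ℝ :=
  @dite _ (IsSimpleFn φ) (Classical.dec _)
    (fun h => ∑ y ∈ h.1.toFinset, y * p ⟨φ ⁻¹' {y}, h.2 y⟩) (fun _ => 0)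

/-- A functional `I : B₀(Σ) → ℝ` is monotonic. -/
def MonotonicFn (I : (S → ℝ) → ℝ) : Prop :=
  ∀ φ ψ, IsSimpleFn φ → IsSimpleFn ψ → (∀ s, φ s ≤ ψ s) → I φ ≤ I ψ

/-- A functional `I : B₀(Σ) → ℝ` is constant-linear: `I(aφ + b) = a I(φ) + b`
for `a ≥ 0`, `b ∈ ℝ`. -/
def ConstLinearFn (I : (S → ℝ) → ℝ) : Prop :=
  ∀ φ, IsSimpleFn φ → ∀ a : ℝ, 0 ≤ a → ∀ b : ℝ,
    I (fun s => a * φ s + b) = a * I φ + b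

end Fns


section MyChargeAux
variable {S : Type*} [MeasurableSpace S]

lemma pc_congr (p : MSet S → ℝ) {A B : Set S} {hA : MeasurableSet A} {hB : MeasurableSet B}
    (h : A = B) : p ⟨A, hA⟩ = p ⟨B, hB⟩ := by
  congr 1; exact Subtype.ext h

lemma pc_union {p : MSet S → ℝ} (hp : p ∈ ProbCharges S) {A B : Set S}
    (hA : MeasurableSet A) (hB : MeasurableSet B) (hd : Disjoint A B)
    {hAB : MeasurableSet (A ∪ B)} :
    p ⟨A ∪ B, hAB⟩ = p ⟨A, hA⟩ + p ⟨B, hB⟩ := by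
  have := hp.2.2 ⟨A, hA⟩ ⟨B, hB⟩ hd
  rw [← this]

lemma pc_biUnion {p : MSet S → ℝ} (hp : p ∈ ProbCharges S) {ι : Type*} (t : Finset ι)
    (A : ι → Set S) (hA : ∀ i, MeasurableSet (A i))
    (hd : ∀ i ∈ t, ∀ j ∈ t, i ≠ j → Disjoint (A i) (A j))
    {hU : MeasurableSet (⋃ i ∈ t, A i)} :
    p ⟨⋃ i ∈ t, A i, hU⟩ = ∑ i ∈ t, p ⟨A i, hA i⟩ := by
  classical
  induction t using Finset.induction with
  | empty =>
    simp only [Finset.sum_empty]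
    have h0 : p ⟨(∅ : Set S), MeasurableSet.empty⟩ = 0 := by
      have := pc_union hp MeasurableSet.empty MeasurableSet.empty (disjoint_bot_left)
        (hAB := MeasurableSet.empty.union MeasurableSet.empty)
      have h1 : p ⟨(∅ : Set S) ∪ ∅, MeasurableSet.empty.union MeasurableSet.empty⟩
          = p ⟨(∅ : Set S), MeasurableSet.empty⟩ := pc_congr p (by simp)
      linarith [this, h1]
    rw [← h0]; exact pc_congr p (by simp)
  | @insert a s hi ih =>
    have hd' : ∀ i ∈ s, ∀ j ∈ s, i ≠ j → Disjoint (A i) (A j) := fun i hi' j hj' =>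
      hd i (Finset.mem_insert_of_mem hi') j (Finset.mem_insert_of_mem hj')
    have hUs : MeasurableSet (⋃ i ∈ s, A i) :=
      MeasurableSet.biUnion s.countable_toSet (fun i _ => hA i)
    have hdisj : Disjoint (A a) (⋃ i ∈ s, A i) := by
      rw [Set.disjoint_iUnion₂_right]
      intro i hi'
      exact hd a (Finset.mem_insert_self a s) i (Finset.mem_insert_of_mem hi')
        (by rintro rfl; exact hi hi')
    have heq : (⋃ i ∈ insert a s, A i) = A a ∪ ⋃ i ∈ s, A i := by
      simp [Set.biUnion_insert]
    rw [pc_congr p (hB := (hA a).union hUs) heq, pc_union hp (hA a) hUs hdisj,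
      Finset.sum_insert hi, ih hd']

lemma fInt_eq (p : MSet S → ℝ) (φ : S → ℝ) (hφ : IsSimpleFn φ) :
    fInt p φ = ∑ y ∈ hφ.1.toFinset, y * p ⟨φ ⁻¹' {y}, hφ.2 y⟩ := by
  unfold fInt
  rw [dif_pos hφ]

lemma fiber_decomp {ι κ : Type*} {χ : S → ι} (hfin : (Set.range χ).Finite)
    (F : ι → κ) (y : κ) :
    letI := Classical.decEq κ
    (fun s => F (χ s)) ⁻¹' {y}
      = ⋃ i ∈ hfin.toFinset.filter (fun i => F i = y), χ ⁻¹' {i} := by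
  classical
  ext s
  simp only [Set.mem_preimage, Set.mem_singleton_iff, Set.mem_iUnion, Finset.mem_filter,
    Set.Finite.mem_toFinset, exists_prop]
  constructor
  · intro h; exact ⟨χ s, ⟨⟨s, rfl⟩, h⟩, rfl⟩
  · rintro ⟨i, ⟨_, hF⟩, hs⟩; exact hs ▸ hF

lemma fiber_disjoint {ι : Type*} (χ : S → ι) {i j : ι} (hij : i ≠ j) :
    Disjoint (χ ⁻¹' {i}) (χ ⁻¹' {j}) := by
  rw [Set.disjoint_left]
  intro s hi hj
  exact hij ((Set.mem_preimage.mp hi).symm.trans (Set.mem_preimage.mp hj))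

lemma comp_fin_meas {ι κ : Type*} {χ : S → ι} (hfin : (Set.range χ).Finite)
    (hmeas : ∀ i, MeasurableSet (χ ⁻¹' {i})) (F : ι → κ) :
    (Set.range (fun s => F (χ s))).Finite ∧
      ∀ y : κ, MeasurableSet ((fun s => F (χ s)) ⁻¹' {y}) := by
  classical
  constructor
  · have : Set.range (fun s => F (χ s)) ⊆ F '' Set.range χ := by
      rintro _ ⟨s, rfl⟩; exact ⟨χ s, ⟨s, rfl⟩, rfl⟩
    exact (hfin.image F).subset this
  · intro y
    rw [fiber_decomp hfin F y]
    exact (hfin.toFinset.filter (fun i => F i = y)).measurableSet_biUnion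
      (fun i _ => hmeas i)

lemma simple_comp {ι : Type*} {χ : S → ι} (hfin : (Set.range χ).Finite)
    (hmeas : ∀ i, MeasurableSet (χ ⁻¹' {i})) (F : ι → ℝ) :
    IsSimpleFn (fun s => F (χ s)) :=
  comp_fin_meas hfin hmeas F

lemma fInt_comp {p : MSet S → ℝ} (hp : p ∈ ProbCharges S) {ι : Type*} {χ : S → ι}
    (hfin : (Set.range χ).Finite) (hmeas : ∀ i, MeasurableSet (χ ⁻¹' {i})) (F : ι → ℝ) :
    fInt p (fun s => F (χ s)) = ∑ i ∈ hfin.toFinset, F i * p ⟨χ ⁻¹' {i}, hmeas i⟩ := by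
  classical
  have hφ : IsSimpleFn (fun s => F (χ s)) := simple_comp hfin hmeas F
  rw [fInt_eq p _ hφ]
  have key : ∀ y, p ⟨(fun s => F (χ s)) ⁻¹' {y}, hφ.2 y⟩
      = ∑ i ∈ hfin.toFinset.filter (fun i => F i = y), p ⟨χ ⁻¹' {i}, hmeas i⟩ := by
    intro y
    have hU : MeasurableSet (⋃ i ∈ hfin.toFinset.filter (fun i => F i = y), χ ⁻¹' {i}) :=
      (hfin.toFinset.filter (fun i => F i = y)).measurableSet_biUnion (fun i _ => hmeas i)
    rw [pc_congr p (hB := hU) (fiber_decomp hfin F y),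
      pc_biUnion hp _ _ hmeas (fun i _ j _ hij => fiber_disjoint χ hij)]
  calc ∑ y ∈ hφ.1.toFinset, y * p ⟨(fun s => F (χ s)) ⁻¹' {y}, hφ.2 y⟩
      = ∑ y ∈ hφ.1.toFinset, ∑ i ∈ hfin.toFinset.filter (fun i => F i = y),
          F i * p ⟨χ ⁻¹' {i}, hmeas i⟩ := by
        refine Finset.sum_congr rfl (fun y _ => ?_)
        rw [key, Finset.mul_sum]
        exact Finset.sum_congr rfl (fun i hi => by
          rw [(Finset.mem_filter.mp hi).2])
    _ = ∑ i ∈ hfin.toFinset, F i * p ⟨χ ⁻¹' {i}, hmeas i⟩ := by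
        refine Finset.sum_fiberwise_of_maps_to (fun i hi => ?_) _
        rw [Set.Finite.mem_toFinset] at hi ⊢
        obtain ⟨s, rfl⟩ := hi
        exact ⟨s, rfl⟩

lemma sum_fiber_one {p : MSet S → ℝ} (hp : p ∈ ProbCharges S) {ι : Type*} {χ : S → ι}
    (hfin : (Set.range χ).Finite) (hmeas : ∀ i, MeasurableSet (χ ⁻¹' {i})) :
    ∑ i ∈ hfin.toFinset, p ⟨χ ⁻¹' {i}, hmeas i⟩ = 1 := by
  classical
  have hU : MeasurableSet (⋃ i ∈ hfin.toFinset, χ ⁻¹' {i}) :=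
    hfin.toFinset.measurableSet_biUnion (fun i _ => hmeas i)
  have heq : (⋃ i ∈ hfin.toFinset, χ ⁻¹' {i}) = Set.univ := by
    ext s
    simp only [Set.mem_iUnion, Set.Finite.mem_toFinset, Set.mem_univ, iff_true, exists_prop]
    exact ⟨χ s, ⟨s, rfl⟩, rfl⟩
  rw [← pc_biUnion hp _ _ hmeas (fun i _ j _ hij => fiber_disjoint χ hij) (hU := hU),
    pc_congr p (hB := MeasurableSet.univ) heq, hp.2.1]

end MyChargeAux

section Acts

variable {S : Type*} [MeasurableSpace S] {V : Type*} [AddCommGroup V] [Module ℝ V]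

/-- `f : S → V` is a simple act with outcomes in `X`: it is `X`-valued,
takes finitely many values and is `Σ`-measurable. -/
def IsAct (X : Set V) (f : S → V) : Prop :=
  (∀ s, f s ∈ X) ∧ (Set.range f).Finite ∧ ∀ v : V, MeasurableSet (f ⁻¹' {v})

/-- Pointwise mixture `αf + (1-α)g` of two acts. -/
def mixAct (α : ℝ) (f g : S → V) : S → V := fun s => α • f s + (1 - α) • g s

/-- The constant act with outcome `x`. -/
def constAct (S : Type*) {V : Type*} (x : V) : S → V := fun _ => x

/-- `u : V → ℝ` is affine on the convex set `X`. -/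
def IsAffineOn (u : V → ℝ) (X : Set V) : Prop :=
  ∀ x ∈ X, ∀ y ∈ X, ∀ α : ℝ, 0 ≤ α → α ≤ 1 →
    u (α • x + (1 - α) • y) = α * u x + (1 - α) * u y

/-- `u` is non-constant on `X`. -/
def NonConstOn (u : V → ℝ) (X : Set V) : Prop := ∃ x ∈ X, ∃ y ∈ X, u x ≠ u y

/-- Expected utility `∫ u(f) dp` of the act `f` under the measure `p`. -/
noncomputable def EU (u : V → ℝ) (f : S → V) (p : MSet S → ℝ) : ℝ :=
  fInt p (fun s => u (f s))

/-- Worst-case expected utility of `f` over the set of scenarios `C`. -/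
noncomputable def minEU (u : V → ℝ) (C : Set (MSet S → ℝ)) (f : S → V) : ℝ :=
  sInf (EU u f '' C)

/-- Best-case expected utility of `f` over the set of scenarios `D`. -/
noncomputable def maxEU (u : V → ℝ) (D : Set (MSet S → ℝ)) (f : S → V) : ℝ :=
  sSup (EU u f '' D)

/-- `f` and `g` are incomparable (`f ⋈ g`). -/
def Incomp (R : (S → V) → (S → V) → Prop) (f g : S → V) : Prop := ¬ R f g ∧ ¬ R g f

end Acts


section MyEUAux
variable {S : Type*} [MeasurableSpace S] [Nonempty S]
variable {V : Type*} [AddCommGroup V] [Module ℝ V]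

lemma act_simple (u : V → ℝ) {X : Set V} {f : S → V} (hf : IsAct X f) :
    IsSimpleFn (fun s => u (f s)) := simple_comp hf.2.1 hf.2.2 u

lemma EU_of_const {u : V → ℝ} {f : S → V} {k : ℝ} (hk : ∀ s, u (f s) = k)
    {p : MSet S → ℝ} (hp : p ∈ ProbCharges S) : EU u f p = k := by
  have hfin : (Set.range (fun _ : S => ())).Finite :=
    (Set.finite_univ (α := Unit)).subset (Set.subset_univ _)
  have hmeas : ∀ i : Unit, MeasurableSet ((fun _ : S => ()) ⁻¹' {i}) := by
    intro i
    have : ((fun _ : S => ()) ⁻¹' {i}) = Set.univ := by ext s; simp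
    rw [this]; exact MeasurableSet.univ
  have h1 : EU u f p = fInt p (fun _ : S => k) := by
    unfold EU; congr 1; funext s; exact hk s
  have h2 : fInt p (fun _ : S => k)
      = ∑ i ∈ hfin.toFinset, k * p ⟨(fun _ : S => ()) ⁻¹' {i}, hmeas i⟩ :=
    fInt_comp hp hfin hmeas (fun _ : Unit => k)
  rw [h1, h2, ← Finset.mul_sum, sum_fiber_one hp hfin hmeas, mul_one]

lemma EU_reflect {u : V → ℝ} {X : Set V} {f g : S → V} (hf : IsAct X f) {k : ℝ}
    (hrel : ∀ s, u (g s) = 2 * k - u (f s)) {p : MSet S → ℝ} (hp : p ∈ ProbCharges S) :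
    EU u g p = 2 * k - EU u f p := by
  have hs := act_simple u hf
  have h0 : EU u g p = fInt p (fun s => 2 * k - u (f s)) := by
    unfold EU; congr 1; funext s; exact hrel s
  have h1 : EU u f p = ∑ y ∈ hs.1.toFinset, y * p ⟨(fun s => u (f s)) ⁻¹' {y}, hs.2 y⟩ :=
    fInt_eq p _ hs
  have h2 := sum_fiber_one hp hs.1 hs.2
  have h3 : fInt p (fun s => 2 * k - u (f s))
      = ∑ y ∈ hs.1.toFinset, (2 * k - y) * p ⟨(fun s => u (f s)) ⁻¹' {y}, hs.2 y⟩ :=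
    fInt_comp hp hs.1 hs.2 (fun y => 2 * k - y)
  rw [h0, h3]
  calc ∑ y ∈ hs.1.toFinset, (2 * k - y) * p ⟨(fun s => u (f s)) ⁻¹' {y}, hs.2 y⟩
      = 2 * k * ∑ y ∈ hs.1.toFinset, p ⟨(fun s => u (f s)) ⁻¹' {y}, hs.2 y⟩
        - ∑ y ∈ hs.1.toFinset, y * p ⟨(fun s => u (f s)) ⁻¹' {y}, hs.2 y⟩ := by
        rw [Finset.mul_sum, ← Finset.sum_sub_distrib]
        exact Finset.sum_congr rfl (fun y _ => by ring)
    _ = 2 * k - EU u f p := by rw [h2, h1, mul_one]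

lemma EU_cont {u : V → ℝ} {f : S → V} (hs : IsSimpleFn (fun s => u (f s))) :
    Continuous (fun p : MSet S → ℝ => EU u f p) := by
  have h : (fun p : MSet S → ℝ => EU u f p)
      = fun p => ∑ y ∈ hs.1.toFinset, y * p ⟨(fun s => u (f s)) ⁻¹' {y}, hs.2 y⟩ := by
    funext p; exact fInt_eq p _ hs
  rw [h]
  exact continuous_finset_sum _ (fun y _ => continuous_const.mul (continuous_apply _))

lemma minEU_le {u : V → ℝ} {f : S → V} (hs : IsSimpleFn (fun s => u (f s)))
    {C : Set (MSet S → ℝ)} (hC : IsCompact C) {p} (hp : p ∈ C) :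
    minEU u C f ≤ EU u f p :=
  csInf_le (hC.image (EU_cont hs)).bddBelow ⟨p, hp, rfl⟩

lemma le_maxEU {u : V → ℝ} {f : S → V} (hs : IsSimpleFn (fun s => u (f s)))
    {C : Set (MSet S → ℝ)} (hC : IsCompact C) {p} (hp : p ∈ C) :
    EU u f p ≤ maxEU u C f :=
  le_csSup (hC.image (EU_cont hs)).bddAbove ⟨p, hp, rfl⟩

lemma le_minEU {u : V → ℝ} {f : S → V} {C : Set (MSet S → ℝ)} (hCne : C.Nonempty)
    {b : ℝ} (hb : ∀ p ∈ C, b ≤ EU u f p) : b ≤ minEU u C f :=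
  le_csInf (hCne.image _) (by rintro _ ⟨p, hp, rfl⟩; exact hb p hp)

lemma maxEU_le {u : V → ℝ} {f : S → V} {C : Set (MSet S → ℝ)} (hCne : C.Nonempty)
    {b : ℝ} (hb : ∀ p ∈ C, EU u f p ≤ b) : maxEU u C f ≤ b :=
  csSup_le (hCne.image _) (by rintro _ ⟨p, hp, rfl⟩; exact hb p hp)

lemma minEU_of_const {u : V → ℝ} {f : S → V} {k : ℝ} (hk : ∀ s, u (f s) = k)
    {C : Set (MSet S → ℝ)} (hCne : C.Nonempty) (hCsub : C ⊆ ProbCharges S) :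
    minEU u C f = k := by
  unfold minEU
  have : EU u f '' C = {k} := by
    rw [Set.image_congr (fun p hp => EU_of_const hk (hCsub hp))]
    exact hCne.image_const k
  rw [this, csInf_singleton]

lemma maxEU_of_const {u : V → ℝ} {f : S → V} {k : ℝ} (hk : ∀ s, u (f s) = k)
    {C : Set (MSet S → ℝ)} (hCne : C.Nonempty) (hCsub : C ⊆ ProbCharges S) :
    maxEU u C f = k := by
  unfold maxEU
  have : EU u f '' C = {k} := by
    rw [Set.image_congr (fun p hp => EU_of_const hk (hCsub hp))]
    exact hCne.image_const k
  rw [this, csSup_singleton]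

lemma constAct_act {X : Set V} {x : V} (hx : x ∈ X) : IsAct X (constAct S x) := by
  refine ⟨fun _ => hx, ?_⟩
  have hfin : (Set.range (fun _ : S => ())).Finite :=
    (Set.finite_univ (α := Unit)).subset (Set.subset_univ _)
  have hmeas : ∀ i : Unit, MeasurableSet ((fun _ : S => ()) ⁻¹' {i}) := by
    intro i
    have : ((fun _ : S => ()) ⁻¹' {i}) = Set.univ := by ext s; simp
    rw [this]; exact MeasurableSet.univ
  exact comp_fin_meas hfin hmeas (fun _ : Unit => x)

lemma pair_fin_meas {ι κ : Type*} {χ : S → ι} {ψ : S → κ}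
    (h1 : (Set.range χ).Finite) (h2 : ∀ i, MeasurableSet (χ ⁻¹' {i}))
    (h3 : (Set.range ψ).Finite) (h4 : ∀ j, MeasurableSet (ψ ⁻¹' {j})) :
    (Set.range (fun s => (χ s, ψ s))).Finite ∧
      ∀ r : ι × κ, MeasurableSet ((fun s => (χ s, ψ s)) ⁻¹' {r}) := by
  constructor
  · refine (h1.prod h3).subset ?_
    rintro _ ⟨s, rfl⟩
    exact ⟨⟨s, rfl⟩, ⟨s, rfl⟩⟩
  · intro r
    have : ((fun s => (χ s, ψ s)) ⁻¹' {r}) = χ ⁻¹' {r.1} ∩ ψ ⁻¹' {r.2} := by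
      ext s; simp [Prod.ext_iff]
    rw [this]; exact (h2 r.1).inter (h4 r.2)

lemma mixAct_act {X : Set V} (hX : Convex ℝ X) {α : ℝ} (hα0 : 0 ≤ α) (hα1 : α ≤ 1)
    {f g : S → V} (hf : IsAct X f) (hg : IsAct X g) : IsAct X (mixAct α f g) := by
  refine ⟨fun s => hX (hf.1 s) (hg.1 s) hα0 (by linarith) (by ring), ?_⟩
  have hp := pair_fin_meas hf.2.1 hf.2.2 hg.2.1 hg.2.2
  exact comp_fin_meas hp.1 hp.2 (fun r : V × V => α • r.1 + (1 - α) • r.2)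

end MyEUAux

section Axioms

variable {S : Type*} [MeasurableSpace S] {V : Type*} [AddCommGroup V] [Module ℝ V]
variable (X : Set V) (R : (S → V) → (S → V) → Prop)

/-- Axiom 1: `≻` is asymmetric and transitive on acts, and its restriction to
constant acts is non-trivial and negatively transitive. -/
def PrefAx1 : Prop :=
  (∀ f g, IsAct X f → IsAct X g → R f g → ¬ R g f) ∧
  (∀ f g h, IsAct X f → IsAct X g → IsAct X h → R f g → R g h → R f h) ∧
  (∃ x ∈ X, ∃ y ∈ X, R (constAct S x) (constAct S y)) ∧
  (∀ x ∈ X, ∀ y ∈ X, ∀ z ∈ X, ¬ R (constAct S x) (constAct S y) →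
    ¬ R (constAct S y) (constAct S z) → ¬ R (constAct S x) (constAct S z))

/-- Axiom 2 (continuity). -/
def PrefAx2 : Prop :=
  ∀ f g h, IsAct X f → IsAct X g → IsAct X h →
    IsOpen {α : Set.Icc (0 : ℝ) 1 | R (mixAct (α : ℝ) f g) h} ∧
    IsOpen {α : Set.Icc (0 : ℝ) 1 | R h (mixAct (α : ℝ) f g)}

/-- Axiom 3 (certainty independence). -/
def PrefAx3 : Prop :=
  ∀ f g, IsAct X f → IsAct X g → ∀ x ∈ X, ∀ α : ℝ, 0 < α → α < 1 →
    (R f g ↔ R (mixAct α f (constAct S x)) (mixAct α g (constAct S x)))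

/-- Axiom 4: for any outcome `x`, the upper and lower contour sets at the
constant act `x` are convex. -/
def PrefAx4 : Prop :=
  ∀ x ∈ X,
    (∀ f g, IsAct X f → IsAct X g → R f (constAct S x) → R g (constAct S x) →
      ∀ α : ℝ, 0 ≤ α → α ≤ 1 → R (mixAct α f g) (constAct S x)) ∧
    (∀ f g, IsAct X f → IsAct X g → R (constAct S x) f → R (constAct S x) g →
      ∀ α : ℝ, 0 ≤ α → α ≤ 1 → R (constAct S x) (mixAct α f g))

/-- Axiom 5 (monotonicity). -/
def PrefAx5 : Prop :=
  ∀ f g, IsAct X f → IsAct X g →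
    (∀ s : S, R (constAct S (f s)) (constAct S (g s))) → R f g

/-- Axiom 6: if every outcome incomparable to `f` is incomparable to `g`,
then `f` and `g` are incomparable. -/
def PrefAx6 : Prop :=
  ∀ f g, IsAct X f → IsAct X g →
    (∀ x ∈ X, Incomp R f (constAct S x) → Incomp R g (constAct S x)) → Incomp R f g

/-- Axiom 7: if `f ⋈ x`, `x ≻ g`, `g ⋈ y` and `f ≻ y`, then `f ≻ g`. -/
def PrefAx7 : Prop :=
  ∀ f g, IsAct X f → IsAct X g → ∀ x ∈ X, ∀ y ∈ X,
    Incomp R f (constAct S x) → R (constAct S x) g →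
    Incomp R g (constAct S y) → R f (constAct S y) → R f g

end Axioms

section Reps

variable {S : Type*} [MeasurableSpace S] {V : Type*} [AddCommGroup V] [Module ℝ V]

/-- `(u, C, D)` is a hope-and-prepare representation of `R`. -/
def IsHPRep (X : Set V) (R : (S → V) → (S → V) → Prop) (u : V → ℝ)
    (C D : Set (MSet S → ℝ)) : Prop :=
  IsAffineOn u X ∧ NonConstOn u X ∧
  C.Nonempty ∧ D.Nonempty ∧ C ⊆ ProbCharges S ∧ D ⊆ ProbCharges S ∧
  IsCompact C ∧ IsCompact D ∧ Convex ℝ C ∧ Convex ℝ D ∧ (C ∩ D).Nonempty ∧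
  ∀ f g, IsAct X f → IsAct X g →
    (R f g ↔ (minEU u C g < minEU u C f ∧ maxEU u D g < maxEU u D f))

/-- `(u, C)` is a Bewley representation of `R`. -/
def IsBewleyRep (X : Set V) (R : (S → V) → (S → V) → Prop) (u : V → ℝ)
    (C : Set (MSet S → ℝ)) : Prop :=
  IsAffineOn u X ∧ NonConstOn u X ∧
  C.Nonempty ∧ C ⊆ ProbCharges S ∧ IsCompact C ∧ Convex ℝ C ∧
  ∀ f g, IsAct X f → IsAct X g → (R f g ↔ ∀ p ∈ C, EU u g p < EU u f p)

/-- `(u, C, D)` is a twofold multi-prior representation of `R`. -/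
def IsTwofoldRep (X : Set V) (R : (S → V) → (S → V) → Prop) (u : V → ℝ)
    (C D : Set (MSet S → ℝ)) : Prop :=
  IsAffineOn u X ∧ NonConstOn u X ∧
  C.Nonempty ∧ D.Nonempty ∧ C ⊆ ProbCharges S ∧ D ⊆ ProbCharges S ∧
  IsCompact C ∧ IsCompact D ∧ Convex ℝ C ∧ Convex ℝ D ∧ (C ∩ D).Nonempty ∧
  ∀ f g, IsAct X f → IsAct X g → (R f g ↔ maxEU u D g < minEU u C f)

end Reps



section Statement

variable {S : Type*} [MeasurableSpace S] [Nonempty S]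
variable {V : Type*} [AddCommGroup V] [Module ℝ V]

/-- Two acts are complementary: their equal-weight mixture is (indifferent to)
a constant act, i.e. all its outcomes are mutually incomparable. -/
def Complementary (R : (S → V) → (S → V) → Prop) (f g : S → V) : Prop :=
  ∀ s s' : S, Incomp R (constAct S (mixAct (2⁻¹ : ℝ) f g s))
    (constAct S (mixAct (2⁻¹ : ℝ) f g s'))

/-- Axiom 8: for complementary `f, g`, `f ≻ ½f+½g` implies `½f+½g ≻ g`. -/
def PrefAx8 (X : Set V) (R : (S → V) → (S → V) → Prop) : Prop :=
  ∀ f g, IsAct X f → IsAct X g → Complementary R f g →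
    R f (mixAct (2⁻¹ : ℝ) f g) → R (mixAct (2⁻¹ : ℝ) f g) g

/-- Axiom 9: for complementary `f, g`, `½f+½g ≻ g` implies `f ≻ ½f+½g`. -/
def PrefAx9 (X : Set V) (R : (S → V) → (S → V) → Prop) : Prop :=
  ∀ f g, IsAct X f → IsAct X g → Complementary R f g →
    R (mixAct (2⁻¹ : ℝ) f g) g → R f (mixAct (2⁻¹ : ℝ) f g)


section MyCLM

lemma clm_pi_finite {ι : Type*} [DecidableEq ι] (f : ((ι → ℝ) →L[ℝ] ℝ)) :
    ∃ T : Finset ι, ∀ x : ι → ℝ, f x = ∑ i ∈ T, x i * f (Pi.single i 1) := by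
  have hmem : f ⁻¹' Set.Ioo (-1 : ℝ) 1 ∈ nhds (0 : ι → ℝ) := by
    have := f.continuous.continuousAt (x := 0)
    apply this.preimage_mem_nhds
    rw [map_zero]
    exact Ioo_mem_nhds (by norm_num) (by norm_num)
  rw [nhds_pi] at hmem
  obtain ⟨I, hIfin, t, ht, hsub⟩ := Filter.mem_pi.mp hmem
  refine ⟨hIfin.toFinset, fun x => ?_⟩
  have hzero : ∀ z : ι → ℝ, (∀ i ∈ I, z i = 0) → f z = 0 := by
    intro z hz
    by_contra hfz
    have hmem2 : ((2 / f z) • z) ∈ Set.pi I t := by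
      intro i hi
      have h0 : ((2 / f z) • z) i = 0 := by simp [hz i hi]
      rw [h0]
      exact mem_of_mem_nhds (ht i)
    have h2 : f ((2 / f z) • z) = 2 := by
      rw [map_smul, smul_eq_mul, div_mul_cancel₀ _ hfz]
    have := hsub hmem2
    rw [Set.mem_preimage, h2] at this
    exact absurd this.2 (by norm_num)
  set y : ι → ℝ := ∑ i ∈ hIfin.toFinset, x i • (Pi.single i (1 : ℝ) : ι → ℝ) with hy
  have hxy : ∀ i ∈ I, (x - y) i = 0 := by
    intro i hi
    have hyi : y i = x i := by
      rw [hy, Finset.sum_apply]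
      have : ∀ j ∈ hIfin.toFinset, (x j • (Pi.single j (1 : ℝ) : ι → ℝ)) i
          = if i = j then x j else 0 := by
        intro j _
        rw [Pi.smul_apply, Pi.single_apply, smul_eq_mul]
        by_cases hji : i = j <;> simp [hji, eq_comm]
      rw [Finset.sum_congr rfl this, Finset.sum_ite_eq hIfin.toFinset i x]
      simp [hIfin.mem_toFinset.mpr hi]
    simp [hyi]
  have h1 : f x = f y := by
    have : f (x - y) = 0 := hzero _ hxy
    have h2 : f x - f y = 0 := by rw [← map_sub]; exact this
    linarith
  rw [h1, hy, map_sum]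
  exact Finset.sum_congr rfl (fun i _ => by rw [map_smul, smul_eq_mul])

end MyCLM

section MyMainAux
variable {S : Type*} [MeasurableSpace S] [Nonempty S]
variable {V : Type*} [AddCommGroup V] [Module ℝ V]
variable {X : Set V} {R : (S → V) → (S → V) → Prop} {u : V → ℝ} {C D : Set (MSet S → ℝ)}

lemma const_pref_iff (hrep : IsHPRep X R u C D) {x y : V} (hx : x ∈ X) (hy : y ∈ X) :
    R (constAct S x) (constAct S y) ↔ u y < u x := by
  obtain ⟨_, _, hCne, hDne, hCsub, hDsub, _, _, _, _, _, hR⟩ := hrep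
  rw [hR _ _ (constAct_act hx) (constAct_act hy),
    minEU_of_const (f := constAct S x) (k := u x) (fun _ => rfl) hCne hCsub,
    minEU_of_const (f := constAct S y) (k := u y) (fun _ => rfl) hCne hCsub,
    maxEU_of_const (f := constAct S x) (k := u x) (fun _ => rfl) hDne hDsub,
    maxEU_of_const (f := constAct S y) (k := u y) (fun _ => rfl) hDne hDsub]
  tauto

lemma incomp_const_iff (hrep : IsHPRep X R u C D) {x y : V} (hx : x ∈ X) (hy : y ∈ X) :
    Incomp R (constAct S x) (constAct S y) ↔ u x = u y := by
  unfold Incomp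
  rw [const_pref_iff hrep hx hy, const_pref_iff hrep hy hx]
  constructor
  · rintro ⟨h1, h2⟩; exact le_antisymm (not_lt.mp h1) (not_lt.mp h2)
  · rintro h; rw [h]; exact ⟨lt_irrefl _, lt_irrefl _⟩

lemma mix_mem {f g : S → V} (hX : Convex ℝ X) (hf : IsAct X f) (hg : IsAct X g) (s : S) :
    mixAct (2⁻¹ : ℝ) f g s ∈ X :=
  hX (hf.1 s) (hg.1 s) (by norm_num) (by norm_num) (by norm_num)

lemma compl_const (hX : Convex ℝ X) (hrep : IsHPRep X R u C D) {f g : S → V}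
    (hf : IsAct X f) (hg : IsAct X g) (hc : Complementary R f g) :
    ∃ k : ℝ, ∀ s, u (mixAct (2⁻¹ : ℝ) f g s) = k := by
  have s₀ := Classical.arbitrary S
  exact ⟨u (mixAct (2⁻¹ : ℝ) f g s₀), fun s =>
    (incomp_const_iff hrep (mix_mem hX hf hg s) (mix_mem hX hf hg s₀)).mp (hc s s₀)⟩

lemma mix_util (haff : IsAffineOn u X) {f g : S → V} (hf : IsAct X f) (hg : IsAct X g)
    (s : S) : u (mixAct (2⁻¹ : ℝ) f g s)
      = 2⁻¹ * u (f s) + (1 - 2⁻¹) * u (g s) :=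
  haff (f s) (hf.1 s) (g s) (hg.1 s) 2⁻¹ (by norm_num) (by norm_num)

lemma easy8 (hX : Convex ℝ X) (hrep : IsHPRep X R u C D) (hDC : D ⊆ C) : PrefAx8 X R := by
  have hrep' := hrep
  obtain ⟨haff, hnc, hCne, hDne, hCsub, hDsub, hCcpt, hDcpt, _, _, hCD, hR⟩ := hrep'
  intro f g hf hg hc hfh
  have hh : IsAct X (mixAct (2⁻¹ : ℝ) f g) := mixAct_act hX (by norm_num) (by norm_num) hf hg
  obtain ⟨k, hk⟩ := compl_const hX hrep hf hg hc
  have hrel : ∀ s, u (g s) = 2 * k - u (f s) := by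
    intro s
    have h1 := mix_util haff hf hg s
    have h2 := hk s
    rw [h1] at h2
    linarith
  obtain ⟨h1, _⟩ := (hR f _ hf hh).mp hfh
  rw [minEU_of_const hk hCne hCsub] at h1
  obtain ⟨p₀, hp₀⟩ := id hCne
  have hEUg : ∀ p, p ∈ ProbCharges S → EU u g p = 2 * k - EU u f p :=
    fun p hp => EU_reflect hf hrel hp
  refine (hR _ g hh hg).mpr ⟨?_, ?_⟩
  · rw [minEU_of_const hk hCne hCsub]
    calc minEU u C g ≤ EU u g p₀ := minEU_le (act_simple u hg) hCcpt hp₀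
      _ = 2 * k - EU u f p₀ := hEUg p₀ (hCsub hp₀)
      _ ≤ 2 * k - minEU u C f := by
          have := minEU_le (act_simple u hf) hCcpt hp₀; linarith
      _ < k := by linarith
  · rw [maxEU_of_const hk hDne hDsub]
    have hb : ∀ p ∈ D, EU u g p ≤ 2 * k - minEU u C f := by
      intro p hp
      rw [hEUg p (hDsub hp)]
      have := minEU_le (act_simple u hf) hCcpt (hDC hp)
      linarith
    calc maxEU u D g ≤ 2 * k - minEU u C f := maxEU_le hDne hb
      _ < k := by linarith

lemma easy9 (hX : Convex ℝ X) (hrep : IsHPRep X R u C D) (hCD' : C ⊆ D) : PrefAx9 X R := by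
  have hrep' := hrep
  obtain ⟨haff, hnc, hCne, hDne, hCsub, hDsub, hCcpt, hDcpt, _, _, hCD, hR⟩ := hrep'
  intro f g hf hg hc hhg
  have hh : IsAct X (mixAct (2⁻¹ : ℝ) f g) := mixAct_act hX (by norm_num) (by norm_num) hf hg
  obtain ⟨k, hk⟩ := compl_const hX hrep hf hg hc
  have hrel : ∀ s, u (g s) = 2 * k - u (f s) := by
    intro s
    have h1 := mix_util haff hf hg s
    have h2 := hk s
    rw [h1] at h2
    linarith
  obtain ⟨_, h2⟩ := (hR _ g hh hg).mp hhg
  rw [maxEU_of_const hk hDne hDsub] at h2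
  obtain ⟨p₀, hp₀⟩ := id hDne
  have hEUf : ∀ p, p ∈ ProbCharges S → EU u f p = 2 * k - EU u g p := by
    intro p hp
    have := EU_reflect hf hrel hp
    linarith
  refine (hR f _ hf hh).mpr ⟨?_, ?_⟩
  · rw [minEU_of_const hk hCne hCsub]
    have hb : ∀ p ∈ C, 2 * k - maxEU u D g ≤ EU u f p := by
      intro p hp
      rw [hEUf p (hCsub hp)]
      have := le_maxEU (act_simple u hg) hDcpt (hCD' hp)
      linarith
    have := le_minEU hCne hb
    linarith
  · rw [maxEU_of_const hk hDne hDsub]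
    calc k < 2 * k - maxEU u D g := by linarith
      _ ≤ 2 * k - EU u g p₀ := by
          have := le_maxEU (act_simple u hg) hDcpt hp₀; linarith
      _ = EU u f p₀ := (hEUf p₀ (hDsub hp₀)).symm
      _ ≤ maxEU u D f := le_maxEU (act_simple u hf) hDcpt hp₀

lemma hard_key (hX : Convex ℝ X) (hrep : IsHPRep X R u C D)
    {E : Set (MSet S → ℝ)} (hEcpt : IsCompact E) (hEconv : Convex ℝ E) (hEne : E.Nonempty)
    (hEPC : E ⊆ ProbCharges S) {q : MSet S → ℝ} (hq : q ∉ E) :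
    ∃ f₀ g₀ : S → V, IsAct X f₀ ∧ IsAct X g₀ ∧ Complementary R f₀ g₀ ∧
      ∃ k β : ℝ, (∀ s, u (mixAct (2⁻¹ : ℝ) f₀ g₀ s) = k) ∧ k < β ∧
        (∀ p ∈ E, β ≤ EU u f₀ p) ∧ (q ∈ ProbCharges S → EU u f₀ q < k) ∧
        (∀ p ∈ ProbCharges S, EU u g₀ p = 2 * k - EU u f₀ p) := by
  classical
  have haff := hrep.1
  -- separation of q from E
  obtain ⟨φ, r, hsep, hrq⟩ := geometric_hahn_banach_closed_point hEconv hEcpt.isClosed hq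
  obtain ⟨p', hp'E, hp'max⟩ := hEcpt.exists_isMaxOn hEne φ.continuous.continuousOn
  rw [isMaxOn_iff] at hp'max
  obtain ⟨T, hT⟩ := clm_pi_finite φ
  set c : MSet S → ℝ := fun A => φ (Pi.single A 1) with hc
  -- utility scale
  obtain ⟨x₀, hx₀, y₀, hy₀, hmM⟩ : ∃ x₀ ∈ X, ∃ y₀ ∈ X, u x₀ < u y₀ := by
    obtain ⟨x₁, hx₁, y₁, hy₁, hne⟩ := hrep.2.1
    rcases hne.lt_or_gt with h | h
    · exact ⟨x₁, hx₁, y₁, hy₁, h⟩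
    · exact ⟨y₁, hy₁, x₁, hx₁, h⟩
  set m := u x₀ with hm
  set M := u y₀ with hM
  have hMm : (0 : ℝ) < M - m := by linarith
  set k := (m + M) / 2 with hk
  -- the atom map
  set χ : S → ({A // A ∈ T} → Bool) := fun s A => decide (s ∈ (A.1 : MSet S).1) with hχdef
  have hfin : (Set.range χ).Finite := Set.toFinite _
  have hmeas : ∀ σ : {A // A ∈ T} → Bool, MeasurableSet (χ ⁻¹' {σ}) := by
    intro σ
    have heq : χ ⁻¹' {σ}
        = ⋂ A : {A // A ∈ T}, (if σ A = true then (A.1 : MSet S).1 else ((A.1 : MSet S).1)ᶜ) := by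
      ext s
      simp only [Set.mem_preimage, Set.mem_singleton_iff, funext_iff, Set.mem_iInter, hχdef]
      refine forall_congr' (fun A => ?_)
      by_cases hσ : σ A = true
      · rw [if_pos hσ, hσ, decide_eq_true_eq]
      · have hσ' : σ A = false := by
          cases hb : σ A
          · rfl
          · exact absurd hb hσ
        rw [if_neg hσ, hσ', Set.mem_compl_iff]
        rw [show (decide (s ∈ (A.1 : MSet S).1) = false) = (¬ (s ∈ (A.1 : MSet S).1))
          from by simp]
    rw [heq]
    exact MeasurableSet.iInter (fun A => by
      by_cases hσ : σ A = true
      · rw [if_pos hσ]; exact (A.1 : MSet S).2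
      · rw [if_neg hσ]; exact ((A.1 : MSet S).2).compl)
  -- the simple function
  set Fψ : ({A // A ∈ T} → Bool) → ℝ :=
    fun σ => r - ∑ A ∈ T.attach, (if σ A = true then c A.1 else 0) with hFψdef
  set B := |r| + ∑ A ∈ T.attach, |c A.1| with hB
  have hB0 : 0 ≤ B := by
    rw [hB]
    have : (0:ℝ) ≤ ∑ A ∈ T.attach, |c A.1| :=
      Finset.sum_nonneg (fun A _ => abs_nonneg _)
    positivity
  have hFb : ∀ σ, |Fψ σ| ≤ B := by
    intro σ
    rw [hFψdef, hB]
    calc |r - ∑ A ∈ T.attach, (if σ A = true then c A.1 else 0)|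
        ≤ |r| + |∑ A ∈ T.attach, (if σ A = true then c A.1 else 0)| := abs_sub _ _
      _ ≤ |r| + ∑ A ∈ T.attach, |c A.1| := by
          gcongr
          calc |∑ A ∈ T.attach, (if σ A = true then c A.1 else 0)|
              ≤ ∑ A ∈ T.attach, |(if σ A = true then c A.1 else 0)| :=
                Finset.abs_sum_le_sum_abs _ _
            _ ≤ ∑ A ∈ T.attach, |c A.1| := by
                refine Finset.sum_le_sum (fun A _ => ?_)
                by_cases hσ : σ A = true
                · rw [if_pos hσ]
                · rw [if_neg hσ, abs_zero]; exact abs_nonneg _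
  clear_value Fψ B
  set a := (M - m) / (2 * (B + 1)) with ha'
  have ha : 0 < a := by
    rw [ha']
    apply div_pos hMm
    linarith
  have haB : a * B ≤ (M - m) / 2 := by
    have h1 : a * (2 * (B + 1)) = M - m := by
      rw [ha']
      field_simp
    nlinarith [ha.le, h1]
  clear_value a
  set tval : ({A // A ∈ T} → Bool) → ℝ :=
    fun σ => (a * Fψ σ + (M - m) / 2) / (M - m) with htval
  have haF : ∀ σ, |a * Fψ σ| ≤ a * B := by
    intro σ
    rw [abs_mul, abs_of_pos ha]
    exact mul_le_mul_of_nonneg_left (hFb σ) ha.le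
  have ht01 : ∀ σ, 0 ≤ tval σ ∧ tval σ ≤ 1 := by
    intro σ
    obtain ⟨hl, hr⟩ := abs_le.mp (haF σ)
    have h9 : 0 ≤ a * Fψ σ + (M - m) / 2 := by linarith
    have h10 : a * Fψ σ + (M - m) / 2 ≤ M - m := by linarith
    rw [htval]
    constructor
    · exact div_nonneg h9 hMm.le
    · rw [div_le_one hMm]
      exact h10
  set o : ℝ → V := fun t => t • y₀ + (1 - t) • x₀ with ho
  have hoX : ∀ t, 0 ≤ t → t ≤ 1 → o t ∈ X := fun t ht0 ht1 =>
    hX hy₀ hx₀ ht0 (by linarith) (by ring)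
  have hou : ∀ t, 0 ≤ t → t ≤ 1 → u (o t) = m + t * (M - m) := by
    intro t ht0 ht1
    rw [ho]
    have := haff y₀ hy₀ x₀ hx₀ t ht0 ht1
    rw [this, hm, hM]
    ring
  have h1t : ∀ σ, 0 ≤ 1 - tval σ ∧ 1 - tval σ ≤ 1 := by
    intro σ
    obtain ⟨h1, h2⟩ := ht01 σ
    constructor <;> linarith
  set f₀ : S → V := fun s => o (tval (χ s)) with hf₀def
  set g₀ : S → V := fun s => o (1 - tval (χ s)) with hg₀def
  have hf₀ : IsAct X f₀ :=
    ⟨fun s => hoX _ (ht01 _).1 (ht01 _).2, comp_fin_meas hfin hmeas (fun σ => o (tval σ))⟩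
  have hg₀ : IsAct X g₀ :=
    ⟨fun s => hoX _ (h1t _).1 (h1t _).2, comp_fin_meas hfin hmeas (fun σ => o (1 - tval σ))⟩
  have htmul : ∀ σ, tval σ * (M - m) = a * Fψ σ + (M - m) / 2 := by
    intro σ
    rw [htval, div_mul_cancel₀ _ hMm.ne']
  have huf : ∀ s, u (f₀ s) = a * Fψ (χ s) + k := by
    intro s
    rw [hf₀def]
    rw [hou _ (ht01 _).1 (ht01 _).2, htmul, hk]
    ring
  have hug : ∀ s, u (g₀ s) = 2 * k - (a * Fψ (χ s) + k) := by
    intro s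
    rw [hg₀def]
    rw [hou _ (h1t _).1 (h1t _).2]
    have ht := htmul (χ s)
    rw [hk]
    linarith [ht]
  have hrel : ∀ s, u (g₀ s) = 2 * k - u (f₀ s) := by
    intro s
    rw [huf s, hug s]
  have hmix : ∀ s, u (mixAct (2⁻¹ : ℝ) f₀ g₀ s) = k := by
    intro s
    rw [mix_util haff hf₀ hg₀ s, hrel s]
    ring
  have hcomp : Complementary R f₀ g₀ := fun s s' =>
    (incomp_const_iff hrep (mix_mem hX hf₀ hg₀ s) (mix_mem hX hf₀ hg₀ s')).mpr
      (by rw [hmix s, hmix s'])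
  -- p(A) as sum over atoms
  have hPA : ∀ (p : MSet S → ℝ), p ∈ ProbCharges S → ∀ A : {A // A ∈ T},
      p A.1 = ∑ σ ∈ hfin.toFinset.filter (fun σ => σ A = true),
        p ⟨χ ⁻¹' {σ}, hmeas σ⟩ := by
    intro p hp A
    have hU : MeasurableSet (⋃ σ ∈ hfin.toFinset.filter (fun σ => σ A = true), χ ⁻¹' {σ}) :=
      Finset.measurableSet_biUnion _ (fun σ _ => hmeas σ)
    have heq : (A.1 : MSet S).1
        = ⋃ σ ∈ hfin.toFinset.filter (fun σ => σ A = true), χ ⁻¹' {σ} := by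
      ext s
      simp only [Set.mem_iUnion, Finset.mem_filter, Set.Finite.mem_toFinset, Set.mem_preimage,
        Set.mem_singleton_iff, exists_prop]
      constructor
      · intro hs
        refine ⟨χ s, ⟨⟨s, rfl⟩, ?_⟩, rfl⟩
        rw [hχdef]
        exact decide_eq_true hs
      · rintro ⟨σ, ⟨_, hσA⟩, hχs⟩
        have h2 : χ s A = true := by rw [hχs]; exact hσA
        rw [hχdef] at h2
        exact of_decide_eq_true h2
    have e0 : p A.1 = p ⟨(A.1 : MSet S).1, (A.1 : MSet S).2⟩ := rfl
    rw [e0, pc_congr p (hB := hU) heq,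
      pc_biUnion hp _ _ hmeas (fun i _ j _ hij => fiber_disjoint χ hij)]
  have hEUf : ∀ p, p ∈ ProbCharges S → EU u f₀ p = a * (r - φ p) + k := by
    intro p hp
    have h1 : EU u f₀ p = fInt p (fun s => a * Fψ (χ s) + k) := by
      unfold EU; congr 1; funext s; exact huf s
    have h2 : fInt p (fun s => a * Fψ (χ s) + k)
        = ∑ σ ∈ hfin.toFinset, (a * Fψ σ + k) * p ⟨χ ⁻¹' {σ}, hmeas σ⟩ :=
      fInt_comp hp hfin hmeas (fun σ => a * Fψ σ + k)
    have h3 : ∑ σ ∈ hfin.toFinset, p ⟨χ ⁻¹' {σ}, hmeas σ⟩ = 1 := sum_fiber_one hp hfin hmeas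
    have h4 : ∑ σ ∈ hfin.toFinset, Fψ σ * p ⟨χ ⁻¹' {σ}, hmeas σ⟩ = r - φ p := by
      have e1 : ∀ σ ∈ hfin.toFinset, Fψ σ * p ⟨χ ⁻¹' {σ}, hmeas σ⟩
          = r * p ⟨χ ⁻¹' {σ}, hmeas σ⟩
            - ∑ A ∈ T.attach, (if σ A = true then c A.1 * p ⟨χ ⁻¹' {σ}, hmeas σ⟩ else 0) := by
        intro σ _
        rw [hFψdef, sub_mul, Finset.sum_mul]
        congr 1
        exact Finset.sum_congr rfl (fun A _ => by rw [ite_mul, zero_mul])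
      rw [Finset.sum_congr rfl e1, Finset.sum_sub_distrib, ← Finset.mul_sum, h3, mul_one,
        Finset.sum_comm]
      congr 1
      have e2 : ∀ A ∈ T.attach, ∑ σ ∈ hfin.toFinset,
          (if σ A = true then c A.1 * p ⟨χ ⁻¹' {σ}, hmeas σ⟩ else 0) = c A.1 * p A.1 := by
        intro A _
        rw [← Finset.sum_filter, ← Finset.mul_sum, ← hPA p hp A]
      rw [Finset.sum_congr rfl e2, hT p, ← Finset.sum_attach T (fun A => p A * φ (Pi.single A 1))]
      exact Finset.sum_congr rfl (fun A _ => by rw [hc, mul_comm])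
    rw [h1, h2]
    calc ∑ σ ∈ hfin.toFinset, (a * Fψ σ + k) * p ⟨χ ⁻¹' {σ}, hmeas σ⟩
        = a * ∑ σ ∈ hfin.toFinset, Fψ σ * p ⟨χ ⁻¹' {σ}, hmeas σ⟩
          + k * ∑ σ ∈ hfin.toFinset, p ⟨χ ⁻¹' {σ}, hmeas σ⟩ := by
          rw [Finset.mul_sum, Finset.mul_sum, ← Finset.sum_add_distrib]
          exact Finset.sum_congr rfl (fun σ _ => by ring)
      _ = a * (r - φ p) + k := by rw [h4, h3, mul_one]
  refine ⟨f₀, g₀, hf₀, hg₀, hcomp, k, a * (r - φ p') + k, hmix, ?_, ?_, ?_, ?_⟩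
  · have : 0 < r - φ p' := by linarith [hsep p' hp'E]
    nlinarith
  · intro p hp
    rw [hEUf p (hEPC hp)]
    have h5 : φ p ≤ φ p' := hp'max p hp
    nlinarith
  · intro hqPC
    rw [hEUf q hqPC]
    have : r - φ q < 0 := by linarith
    nlinarith
  · exact fun p hp => EU_reflect hf₀ hrel hp

end MyMainAux

/-- Theorem 2: for a hope-and-prepare preference with
representation `(u, C, D)`: Axiom 8 holds iff `D ⊆ C`, Axiom 9 holds iff
`C ⊆ D`; hence both hold iff `C = D` (concordance). -/
theorem statement1 (X : Set V) (hX : Convex ℝ X) (hX2 : ∃ x ∈ X, ∃ y ∈ X, x ≠ y)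
    (R : (S → V) → (S → V) → Prop) (u : V → ℝ) (C D : Set (MSet S → ℝ))
    (hrep : IsHPRep X R u C D) :
    (PrefAx8 X R ↔ D ⊆ C) ∧ (PrefAx9 X R ↔ C ⊆ D) ∧
    ((PrefAx8 X R ∧ PrefAx9 X R) ↔ C = D) := by
  have hrep' := hrep
  obtain ⟨haff, hnc, hCne, hDne, hCsub, hDsub, hCcpt, hDcpt, hCconv, hDconv, hCDne, hR⟩ := hrep'
  obtain ⟨p₀, hp₀C, hp₀D⟩ := hCDne
  have h8 : PrefAx8 X R ↔ D ⊆ C := by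
    constructor
    · intro hax q hqD
      by_contra hqC
      obtain ⟨f₀, g₀, hf₀, hg₀, hcomp, k, β, hmix, hkβ, hEb, hq', hrefl⟩ :=
        hard_key hX hrep hCcpt hCconv hCne hCsub hqC
      have hh : IsAct X (mixAct (2⁻¹ : ℝ) f₀ g₀) :=
        mixAct_act hX (by norm_num) (by norm_num) hf₀ hg₀
      have hminh : minEU u C (mixAct (2⁻¹ : ℝ) f₀ g₀) = k := minEU_of_const hmix hCne hCsub
      have hmaxh : maxEU u D (mixAct (2⁻¹ : ℝ) f₀ g₀) = k := maxEU_of_const hmix hDne hDsub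
      have hfh : R f₀ (mixAct (2⁻¹ : ℝ) f₀ g₀) := by
        refine (hR f₀ _ hf₀ hh).mpr ⟨?_, ?_⟩
        · rw [hminh]
          calc k < β := hkβ
            _ ≤ minEU u C f₀ := le_minEU hCne hEb
        · rw [hmaxh]
          calc k < β := hkβ
            _ ≤ EU u f₀ p₀ := hEb p₀ hp₀C
            _ ≤ maxEU u D f₀ := le_maxEU (act_simple u hf₀) hDcpt hp₀D
      have hhg := hax f₀ g₀ hf₀ hg₀ hcomp hfh
      obtain ⟨_, h2⟩ := (hR _ g₀ hh hg₀).mp hhg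
      rw [hmaxh] at h2
      have hgq : EU u g₀ q = 2 * k - EU u f₀ q := hrefl q (hDsub hqD)
      have h3 : EU u g₀ q ≤ maxEU u D g₀ := le_maxEU (act_simple u hg₀) hDcpt hqD
      have h4 := hq' (hDsub hqD)
      linarith
    · exact easy8 hX hrep
  have h9 : PrefAx9 X R ↔ C ⊆ D := by
    constructor
    · intro hax q hqC
      by_contra hqD
      obtain ⟨f₀, g₀, hf₀, hg₀, hcomp, k, β, hmix, hkβ, hEb, hq', hrefl⟩ :=
        hard_key hX hrep hDcpt hDconv hDne hDsub hqD
      have hh : IsAct X (mixAct (2⁻¹ : ℝ) f₀ g₀) :=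
        mixAct_act hX (by norm_num) (by norm_num) hf₀ hg₀
      have hminh : minEU u C (mixAct (2⁻¹ : ℝ) f₀ g₀) = k := minEU_of_const hmix hCne hCsub
      have hmaxh : maxEU u D (mixAct (2⁻¹ : ℝ) f₀ g₀) = k := maxEU_of_const hmix hDne hDsub
      have hhg : R (mixAct (2⁻¹ : ℝ) f₀ g₀) g₀ := by
        refine (hR _ g₀ hh hg₀).mpr ⟨?_, ?_⟩
        · rw [hminh]
          have h5 : EU u g₀ p₀ = 2 * k - EU u f₀ p₀ := hrefl p₀ (hCsub hp₀C)
          have h6 : β ≤ EU u f₀ p₀ := hEb p₀ hp₀D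
          calc minEU u C g₀ ≤ EU u g₀ p₀ := minEU_le (act_simple u hg₀) hCcpt hp₀C
            _ < k := by linarith
        · rw [hmaxh]
          have h7 : ∀ p ∈ D, EU u g₀ p ≤ 2 * k - β := by
            intro p hp
            have h71 := hrefl p (hDsub hp)
            have h72 := hEb p hp
            linarith
          calc maxEU u D g₀ ≤ 2 * k - β := maxEU_le hDne h7
            _ < k := by linarith
      have hfh := hax f₀ g₀ hf₀ hg₀ hcomp hhg
      obtain ⟨h1, _⟩ := (hR f₀ _ hf₀ hh).mp hfh
      rw [hminh] at h1
      have h5 : minEU u C f₀ ≤ EU u f₀ q := minEU_le (act_simple u hf₀) hCcpt hqC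
      have h6 := hq' (hCsub hqC)
      linarith
    · exact easy9 hX hrep
  refine ⟨h8, h9, ?_, ?_⟩
  · rintro ⟨a8, a9⟩
    exact Set.Subset.antisymm (h9.mp a9) (h8.mp a8)
  · rintro rfl
    exact ⟨h8.mpr (fun p hp => hp), h9.mpr (fun p hp => hp)⟩

end Statement
end

section
/- Let ≻ be a hope-and-prepare preference with representation (u, C, D), and let ≻* be a binary relation on F. The following are equivalent: (i) ≻* is invariant biseparable and extends ≻; (ii) there exists α ∈ [0,1] such that for all f,g ∈ F, f ≻* g iff α·min_{p∈C}∫u(f)dp + (1-α)·max_{p∈D}∫u(f)dp > α·min_{p∈C}∫u(g)dp + (1-α)·max_{p∈D}∫u(g)dp. Moreover, if ≻ is not complete (i.e. there exists f ∈ F with min_{p∈C}∫u(f)dp < max_{p∈D}∫u(f)dp), then the weight α in (ii) is unique. -/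
/-!
Framework: Anscombe–Aumann acts, finitely additive probability measures,
simple acts, hope-and-prepare preferences (Bastianello–Hill style setup).
-/

open Set

section Statement

variable {S : Type*} [MeasurableSpace S] [Nonempty S]
variable {V : Type*} [AddCommGroup V] [Module ℝ V]

/-- A relation on `F` is invariant biseparable: asymmetric, negatively
transitive, and satisfies Axioms 2, 3 and 5. -/
def InvBiseparable (X : Set V) (R : (S → V) → (S → V) → Prop) : Prop :=
  (∀ f g, IsAct X f → IsAct X g → R f g → ¬ R g f) ∧
  (∀ f g h, IsAct X f → IsAct X g → IsAct X h → ¬ R f g → ¬ R g h → ¬ R f h) ∧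
  PrefAx2 X R ∧ PrefAx3 X R ∧ PrefAx5 X R

/-- The asymmetric `α`-maxmin evaluation of an act. -/
noncomputable def alphaVal (u : V → ℝ) (C D : Set (MSet S → ℝ)) (α : ℝ)
    (f : S → V) : ℝ :=
  α * minEU u C f + (1 - α) * maxEU u D f

end Statement

/-!
An invariant biseparable `≻*` that strictly prefers higher-utility constants assigns a
certainty equivalent to every act `f`: the constants on the segment from the worst to the best
outcome of `f` that beat `f`, and those that `f` beats, are disjoint open sets (continuity), so by
connectedness some constant `e` is incomparable to `f`; then `f ≻* g` iff `u e_f > u e_g`.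
If `≻*` extends the hope-and-prepare preference, `u e_f` lies between `m f = min_C ∫ u(f)` and
`M f = max_D ∫ u(f)`, is monotone in `(m f, M f)`, and (by certainty independence) commutes with
mixing by constants. Mixing two acts with constants until their pairs `(m, M)` coincide shows that
`(M f - u e_f) / (M f - m f)` is the same number `α` for every act with `m f < M f`, which gives
`u e_f = α m f + (1 - α) M f`; and `α` is unique because this identity is forced for any
representing `α`.
Conversely, since `C` and `D` are weak*-compact, the `α`-maxmin value is continuous along
mixtures, affine under mixing with constants and strictly monotone, hence satisfies the axioms.
-/

open Filter Topology

section SimpleMaps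

variable {S : Type*} [MeasurableSpace S] {W W' : Type*}

def IsSimpleMap (G : S → W) : Prop :=
  (range G).Finite ∧ ∀ w, MeasurableSet (G ⁻¹' {w})

lemma IsSimpleMap.measurableSet_preimage {G : S → W} (hG : IsSimpleMap G) (A : Set W) :
    MeasurableSet (G ⁻¹' A) := by
  rw [← preimage_inter_range, ← biUnion_preimage_singleton]
  exact (hG.1.subset inter_subset_right).measurableSet_biUnion fun w _ => hG.2 w

lemma IsSimpleMap.comp {G : S → W} (hG : IsSimpleMap G) (k : W → W') :
    IsSimpleMap fun s => k (G s) :=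
  ⟨(hG.1.image k).subset (range_comp k G).le, fun w => hG.measurableSet_preimage (k ⁻¹' {w})⟩

lemma IsSimpleMap.prodMk {f : S → W} {g : S → W'} (hf : IsSimpleMap f) (hg : IsSimpleMap g) :
    IsSimpleMap fun s => (f s, g s) := by
  refine ⟨(hf.1.prod hg.1).subset ?_, fun w => ?_⟩
  · rintro _ ⟨s, rfl⟩; exact ⟨⟨s, rfl⟩, ⟨s, rfl⟩⟩
  · have : (fun s => (f s, g s)) ⁻¹' {w} = f ⁻¹' {w.1} ∩ g ⁻¹' {w.2} := by
      ext s; simp [Prod.ext_iff]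
    rw [this]; exact (hf.2 _).inter (hg.2 _)

lemma isSimpleMap_const (w : W) : IsSimpleMap fun _ : S => w :=
  ⟨(finite_singleton w).subset range_const_subset, fun _ => MeasurableSet.const _⟩

end SimpleMaps

section Integral

variable {S : Type*} [MeasurableSpace S] {p : MSet S → ℝ} {W : Type*}

namespace ProbCharges

lemma apply_empty (hp : p ∈ ProbCharges S) : p ⟨∅, MeasurableSet.empty⟩ = 0 := by
  have h := hp.2.2 ⟨∅, .empty⟩ ⟨∅, .empty⟩ (disjoint_empty _)
  simp only [union_empty] at h
  linarith

lemma apply_biUnion (hp : p ∈ ProbCharges S) {ι : Type*} (t : Finset ι) {A : ι → Set S}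
    (hA : ∀ i, MeasurableSet (A i)) (hd : (t : Set ι).PairwiseDisjoint A) :
    p ⟨⋃ i ∈ t, A i, Finset.measurableSet_biUnion t fun i _ => hA i⟩
      = ∑ i ∈ t, p ⟨A i, hA i⟩ := by
  classical
  induction t using Finset.induction_on with
  | empty => simpa using ProbCharges.apply_empty hp
  | insert a t ha ih =>
    rw [Finset.coe_insert, pairwiseDisjoint_insert] at hd
    have hU : MeasurableSet (⋃ i ∈ t, A i) := Finset.measurableSet_biUnion t fun i _ => hA i
    have hdisj : Disjoint (A a) (⋃ i ∈ t, A i) :=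
      disjoint_iUnion₂_right.2 fun i hi => hd.2 i hi (ne_of_mem_of_not_mem hi ha).symm
    rw [Finset.sum_insert ha, ← ih hd.1, ← hp.2.2 ⟨A a, hA a⟩ ⟨_, hU⟩ hdisj]
    congr 2
    simp

end ProbCharges

lemma fInt_eq_sum (hp : p ∈ ProbCharges S) {φ : S → ℝ} (hφ : IsSimpleFn φ) {T : Finset ℝ}
    (hT : range φ ⊆ T) : fInt p φ = ∑ y ∈ T, y * p ⟨φ ⁻¹' {y}, hφ.2 y⟩ := by
  rw [fInt, dif_pos hφ]
  refine Finset.sum_subset (fun y hy => hT (hφ.1.mem_toFinset.1 hy)) fun y _ hy => ?_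
  have : φ ⁻¹' {y} = ∅ := by
    ext s; simpa using fun h => hy (hφ.1.mem_toFinset.2 ⟨s, h⟩)
  simp_rw [this, ProbCharges.apply_empty hp, mul_zero]

lemma fInt_comp_s2 (hp : p ∈ ProbCharges S) {G : S → W} (hG : IsSimpleMap G) (k : W → ℝ)
    {T : Finset W} (hT : range G ⊆ T) :
    fInt p (fun s => k (G s)) = ∑ w ∈ T, k w * p ⟨G ⁻¹' {w}, hG.2 w⟩ := by
  classical
  have hkG : IsSimpleFn fun s => k (G s) := hG.comp k
  have hfib (y : ℝ) : p ⟨(fun s => k (G s)) ⁻¹' {y}, hkG.2 y⟩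
      = ∑ w ∈ T with k w = y, p ⟨G ⁻¹' {w}, hG.2 w⟩ := by
    rw [← ProbCharges.apply_biUnion hp _ (fun w => hG.2 w)
      (fun w _ w' _ hne => disjoint_left.2 fun s hs hs' => hne (hs.symm.trans hs'))]
    congr 2
    ext s
    simp only [mem_preimage, mem_singleton_iff, mem_iUnion, Finset.mem_filter, exists_prop]
    exact ⟨fun h => ⟨G s, ⟨hT ⟨s, rfl⟩, h⟩, rfl⟩, fun ⟨w, ⟨_, hw⟩, hs⟩ => hs ▸ hw⟩
  have hTk : range (fun s => k (G s)) ⊆ T.image k := by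
    rintro _ ⟨s, rfl⟩; simpa using ⟨G s, hT ⟨s, rfl⟩, rfl⟩
  rw [fInt_eq_sum hp hkG hTk,
    ← Finset.sum_fiberwise_of_maps_to (g := k) (fun w hw => Finset.mem_image_of_mem k hw)]
  refine Finset.sum_congr rfl fun y _ => ?_
  rw [hfib, Finset.mul_sum]
  exact Finset.sum_congr rfl fun w hw => by rw [(Finset.mem_filter.1 hw).2]

lemma fInt_const (hp : p ∈ ProbCharges S) (c : ℝ) : fInt p (fun _ : S => c) = c := by
  rw [fInt_eq_sum hp (isSimpleMap_const c) (T := {c}) (by simp),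
    Finset.sum_singleton]
  simp_rw [preimage_const_of_mem (mem_singleton c)]
  rw [hp.2.1, mul_one]

lemma fInt_comp_add (hp : p ∈ ProbCharges S) {G : S → W} (hG : IsSimpleMap G)
    (k₁ k₂ : W → ℝ) :
    fInt p (fun s => k₁ (G s) + k₂ (G s))
      = fInt p (fun s => k₁ (G s)) + fInt p (fun s => k₂ (G s)) := by
  have hT : range G ⊆ hG.1.toFinset := by simp
  rw [fInt_comp_s2 hp hG (fun w => k₁ w + k₂ w) hT, fInt_comp_s2 hp hG k₁ hT, fInt_comp_s2 hp hG k₂ hT,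
    ← Finset.sum_add_distrib]
  simp_rw [add_mul]

lemma fInt_const_mul (hp : p ∈ ProbCharges S) {φ : S → ℝ} (hφ : IsSimpleMap φ) (c : ℝ) :
    fInt p (fun s => c * φ s) = c * fInt p φ := by
  have hT : range φ ⊆ hφ.1.toFinset := by simp
  rw [fInt_comp_s2 hp hφ (c * ·) hT, fInt_comp_s2 hp hφ (fun y => y) hT, Finset.mul_sum]
  simp_rw [mul_assoc]

lemma fInt_comp_mono (hp : p ∈ ProbCharges S) {G : S → W} (hG : IsSimpleMap G)
    {k₁ k₂ : W → ℝ} (h : ∀ s, k₁ (G s) ≤ k₂ (G s)) :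
    fInt p (fun s => k₁ (G s)) ≤ fInt p (fun s => k₂ (G s)) := by
  have hT : range G ⊆ hG.1.toFinset := by simp
  rw [fInt_comp_s2 hp hG k₁ hT, fInt_comp_s2 hp hG k₂ hT]
  refine Finset.sum_le_sum fun w hw => ?_
  obtain ⟨s, rfl⟩ := hG.1.mem_toFinset.1 hw
  exact mul_le_mul_of_nonneg_right (h s) (hp.1 _)

lemma continuous_fInt (φ : S → ℝ) : Continuous fun p : MSet S → ℝ => fInt p φ := by
  unfold fInt
  split_ifs
  · exact continuous_finsetSum _ fun y _ => continuous_const.mul (continuous_apply _)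
  · exact continuous_const

end Integral

section Acts

variable {S V : Type*} {X : Set V} {u : V → ℝ} {R : (S → V) → (S → V) → Prop} {f g : S → V}

lemma IsAct.isSimpleMap [MeasurableSpace S] (hf : IsAct X f) : IsSimpleMap f := hf.2

lemma isAct_constAct [MeasurableSpace S] {x : V} (hx : x ∈ X) : IsAct X (constAct S x) :=
  ⟨fun _ => hx, isSimpleMap_const x⟩

lemma NonConstOn.neg (hu : NonConstOn u X) : NonConstOn (-u) X :=
  let ⟨x, hx, y, hy, hxy⟩ := hu
  ⟨x, hx, y, hy, by simpa using hxy⟩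

lemma NonConstOn.exists_ne (hu : NonConstOn u X) (x : V) : ∃ z ∈ X, u z ≠ u x := by
  obtain ⟨a, ha, b, hb, hab⟩ := hu
  by_cases hax : u a = u x
  · exact ⟨b, hb, hax ▸ hab.symm⟩
  · exact ⟨a, ha, hax⟩

lemma NonConstOn.exists_lt (hu : NonConstOn u X) : ∃ x₀ ∈ X, ∃ x₁ ∈ X, u x₀ < u x₁ := by
  obtain ⟨x, hx, y, hy, hxy⟩ := hu
  rcases hxy.lt_or_gt with h | h
  · exact ⟨x, hx, y, hy, h⟩
  · exact ⟨y, hy, x, hx, h⟩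

def RanksConstantsBy (X : Set V) (u : V → ℝ) (R : (S → V) → (S → V) → Prop) : Prop :=
  ∀ x ∈ X, ∀ y ∈ X, u y < u x → R (constAct S x) (constAct S y)

lemma RanksConstantsBy.flip (h : RanksConstantsBy X u R) : RanksConstantsBy X (-u) (flip R) :=
  fun x hx y hy hxy => h y hy x hx (neg_lt_neg_iff.1 hxy)

variable [AddCommGroup V] [Module ℝ V]

lemma mixAct_one (f g : S → V) : mixAct 1 f g = f := by
  funext s; simp [mixAct]

lemma mixAct_constAct (t : ℝ) (x y : V) :
    mixAct t (constAct S x) (constAct S y) = constAct S (t • x + (1 - t) • y) := rfl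

lemma IsAct.mixAct [MeasurableSpace S] (hX : Convex ℝ X) (hf : IsAct X f) (hg : IsAct X g)
    {t : ℝ} (ht : t ∈ Icc (0 : ℝ) 1) : IsAct X (mixAct t f g) :=
  ⟨fun s => hX (hf.1 s) (hg.1 s) ht.1 (by linarith [ht.2]) (by ring),
    (hf.isSimpleMap.prodMk hg.isSimpleMap).comp fun w => t • w.1 + (1 - t) • w.2⟩

lemma IsAffineOn.neg (hu : IsAffineOn u X) : IsAffineOn (-u) X := fun x hx y hy t ht₀ ht₁ => by
  simp only [Pi.neg_apply, hu x hx y hy t ht₀ ht₁]; ring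

lemma IsAffineOn.exists_eq (hX : Convex ℝ X) (hu : IsAffineOn u X) {x₀ x₁ : V} (hx₀ : x₀ ∈ X)
    (hx₁ : x₁ ∈ X) {r : ℝ} (hr : r ∈ Icc (u x₀) (u x₁)) : ∃ x ∈ X, u x = r := by
  obtain ⟨t, ht, rfl⟩ := intermediate_value_Icc zero_le_one
    (f := fun t : ℝ => t * u x₁ + (1 - t) * u x₀) (by fun_prop) (by simpa using hr)
  exact ⟨t • x₁ + (1 - t) • x₀, hX hx₁ hx₀ ht.1 (by linarith [ht.2]) (by ring),
    hu _ hx₁ _ hx₀ _ ht.1 ht.2⟩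

end Acts

lemma monotone_mul_add {t : ℝ} (ht : 0 ≤ t) (c : ℝ) : Monotone fun r : ℝ => t * r + c :=
  fun _ _ h => add_le_add_left (mul_le_mul_of_nonneg_left h ht) c

section ExpectedUtility

variable {S : Type*} [MeasurableSpace S] {V : Type*} {X : Set V} {u : V → ℝ}
  {p : MSet S → ℝ} {f g : S → V}

lemma continuous_EU (u : V → ℝ) (f : S → V) : Continuous (EU u f) :=
  continuous_fInt _

lemma EU_constAct (hp : p ∈ ProbCharges S) (x : V) : EU u (constAct S x) p = u x :=
  fInt_const hp (u x)

lemma EU_lt_EU [Nonempty S] (hp : p ∈ ProbCharges S) (hf : IsAct X f) (hg : IsAct X g)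
    (h : ∀ s, u (g s) < u (f s)) : EU u g p < EU u f p := by
  have hfg := hf.isSimpleMap.prodMk hg.isSimpleMap
  obtain ⟨_, ⟨s₀, rfl⟩, hs₀⟩ :=
    exists_min_image _ (fun w : V × V => u w.1 - u w.2) hfg.1 (range_nonempty _)
  have hgap : ∀ s, u (f s₀) - u (g s₀) ≤ u (f s) - u (g s) := fun s => hs₀ _ ⟨s, rfl⟩
  calc EU u g p < EU u g p + (u (f s₀) - u (g s₀)) := by linarith [h s₀]
    _ = EU u g p + fInt p (fun _ => u (f s₀) - u (g s₀)) := by rw [fInt_const hp]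
    _ ≤ EU u g p + fInt p (fun s => u (f s) - u (g s)) := by
        gcongr 1
        exact fInt_comp_mono hp hfg (k₁ := fun _ => _) (k₂ := fun w => u w.1 - u w.2) hgap
    _ = EU u f p := by
        rw [EU, EU, ← fInt_comp_add hp hfg (fun w => u w.2) (fun w => u w.1 - u w.2)]
        simp only [add_sub_cancel]

structure IsPriorSet (C : Set (MSet S → ℝ)) : Prop where
  nonempty : C.Nonempty
  subset_probCharges : C ⊆ ProbCharges S
  isCompact : IsCompact C

variable {C D : Set (MSet S → ℝ)} {α : ℝ}

lemma minEU_le_EU (hC : IsCompact C) (hp : p ∈ C) : minEU u C f ≤ EU u f p :=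
  csInf_le (hC.image (continuous_EU u f)).bddBelow ⟨p, hp, rfl⟩

lemma EU_le_maxEU (hD : IsCompact D) (hp : p ∈ D) : EU u f p ≤ maxEU u D f :=
  le_csSup (hD.image (continuous_EU u f)).bddAbove ⟨p, hp, rfl⟩

lemma IsPriorSet.exists_EU_eq_minEU (hC : IsPriorSet C) : ∃ p ∈ C, EU u f p = minEU u C f :=
  (hC.isCompact.image (continuous_EU u f)).sInf_mem (hC.nonempty.image _)

lemma IsPriorSet.exists_EU_eq_maxEU (hD : IsPriorSet D) : ∃ p ∈ D, EU u f p = maxEU u D f :=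
  (hD.isCompact.image (continuous_EU u f)).sSup_mem (hD.nonempty.image _)

lemma minEU_le_maxEU (hC : IsCompact C) (hD : IsCompact D) (hCD : (C ∩ D).Nonempty) :
    minEU u C f ≤ maxEU u D f :=
  let ⟨_, hpC, hpD⟩ := hCD
  (minEU_le_EU hC hpC).trans (EU_le_maxEU hD hpD)

lemma IsPriorSet.minEU_constAct (hC : IsPriorSet C) (x : V) : minEU u C (constAct S x) = u x := by
  rw [minEU, image_congr fun _ hp => EU_constAct (hC.subset_probCharges hp) x,
    hC.nonempty.image_const, csInf_singleton]

lemma IsPriorSet.maxEU_constAct (hD : IsPriorSet D) (x : V) : maxEU u D (constAct S x) = u x := by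
  rw [maxEU, image_congr fun _ hp => EU_constAct (hD.subset_probCharges hp) x,
    hD.nonempty.image_const, csSup_singleton]

lemma alphaVal_constAct (hC : IsPriorSet C) (hD : IsPriorSet D) (x : V) :
    alphaVal u C D α (constAct S x) = u x := by
  rw [alphaVal, hC.minEU_constAct, hD.maxEU_constAct]; ring

lemma alphaVal_lt_alphaVal (hα : α ∈ Icc (0 : ℝ) 1) (hmin : minEU u C g < minEU u C f)
    (hmax : maxEU u D g < maxEU u D f) : alphaVal u C D α g < alphaVal u C D α f := by
  unfold alphaVal
  rcases hα.1.eq_or_lt with rfl | hα₀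
  · simpa using hmax
  · nlinarith [hα.2]

lemma alphaVal_lt_alphaVal_of_lt [Nonempty S] (hC : IsPriorSet C) (hD : IsPriorSet D)
    (hα : α ∈ Icc (0 : ℝ) 1) (hf : IsAct X f) (hg : IsAct X g) (h : ∀ s, u (g s) < u (f s)) :
    alphaVal u C D α g < alphaVal u C D α f := by
  obtain ⟨p, hpC, hp⟩ := hC.exists_EU_eq_minEU (u := u) (f := f)
  obtain ⟨q, hqD, hq⟩ := hD.exists_EU_eq_maxEU (u := u) (f := g)
  refine alphaVal_lt_alphaVal hα ?_ ?_
  · calc minEU u C g ≤ EU u g p := minEU_le_EU hC.isCompact hpC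
      _ < EU u f p := EU_lt_EU (hC.subset_probCharges hpC) hf hg h
      _ = minEU u C f := hp
  · calc maxEU u D g = EU u g q := hq.symm
      _ < EU u f q := EU_lt_EU (hD.subset_probCharges hqD) hf hg h
      _ ≤ maxEU u D f := EU_le_maxEU hD.isCompact hqD

lemma eq_of_alphaVal_eq (hgap : minEU u C f < maxEU u D f)
    (h : alphaVal u C D α f = alphaVal u C D β f) : α = β := by
  unfold alphaVal at h
  exact mul_right_cancel₀ (sub_ne_zero.2 hgap.ne) (by linear_combination h)

variable [AddCommGroup V] [Module ℝ V]

lemma EU_mixAct (hp : p ∈ ProbCharges S) (hu : IsAffineOn u X) (hf : IsAct X f)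
    (hg : IsAct X g) {t : ℝ} (ht : t ∈ Icc (0 : ℝ) 1) :
    EU u (mixAct t f g) p = t * EU u f p + (1 - t) * EU u g p := by
  have hfg := hf.isSimpleMap.prodMk hg.isSimpleMap
  calc EU u (mixAct t f g) p = fInt p (fun s => t * u (f s) + (1 - t) * u (g s)) := by
        simp only [EU, mixAct, hu _ (hf.1 _) _ (hg.1 _) t ht.1 ht.2]
    _ = t * EU u f p + (1 - t) * EU u g p := by
        rw [fInt_comp_add hp hfg (fun w => t * u w.1) (fun w => (1 - t) * u w.2),
          fInt_const_mul hp (hf.isSimpleMap.comp u), fInt_const_mul hp (hg.isSimpleMap.comp u)]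
        rfl

lemma EU_mixAct_constAct_image (hCP : C ⊆ ProbCharges S) (hu : IsAffineOn u X)
    (hf : IsAct X f) {x : V} (hx : x ∈ X) {t : ℝ} (ht : t ∈ Icc (0 : ℝ) 1) :
    EU u (mixAct t f (constAct S x)) '' C = (fun r => t * r + (1 - t) * u x) '' (EU u f '' C) := by
  rw [image_image]
  exact image_congr fun p hp => by
    rw [EU_mixAct (hCP hp) hu hf (isAct_constAct hx) ht, EU_constAct (hCP hp)]

lemma IsPriorSet.minEU_mixAct_constAct (hC : IsPriorSet C) (hu : IsAffineOn u X)
    (hf : IsAct X f) {x : V} (hx : x ∈ X) {t : ℝ} (ht : t ∈ Icc (0 : ℝ) 1) :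
    minEU u C (mixAct t f (constAct S x)) = t * minEU u C f + (1 - t) * u x := by
  rw [minEU, EU_mixAct_constAct_image hC.subset_probCharges hu hf hx ht]
  exact (monotone_mul_add ht.1 _).map_csInf_of_continuousAt (by fun_prop)
    (hC.nonempty.image _) (hC.isCompact.image (continuous_EU u f)).bddBelow |>.symm

lemma IsPriorSet.maxEU_mixAct_constAct (hD : IsPriorSet D) (hu : IsAffineOn u X)
    (hf : IsAct X f) {x : V} (hx : x ∈ X) {t : ℝ} (ht : t ∈ Icc (0 : ℝ) 1) :
    maxEU u D (mixAct t f (constAct S x)) = t * maxEU u D f + (1 - t) * u x := by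
  rw [maxEU, EU_mixAct_constAct_image hD.subset_probCharges hu hf hx ht]
  exact (monotone_mul_add ht.1 _).map_csSup_of_continuousAt (by fun_prop)
    (hD.nonempty.image _) (hD.isCompact.image (continuous_EU u f)).bddAbove |>.symm

lemma EU_mixAct_image (hCP : C ⊆ ProbCharges S) (hu : IsAffineOn u X) (hf : IsAct X f)
    (hg : IsAct X g) (t : Icc (0 : ℝ) 1) :
    EU u (mixAct t f g) '' C = (fun p => t * EU u f p + (1 - t) * EU u g p) '' C :=
  image_congr fun _ hp => EU_mixAct (hCP hp) hu hf hg t.2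

lemma IsPriorSet.continuous_minEU_mixAct (hC : IsPriorSet C) (hu : IsAffineOn u X)
    (hf : IsAct X f) (hg : IsAct X g) :
    Continuous fun t : Icc (0 : ℝ) 1 => minEU u C (mixAct t f g) := by
  simp only [minEU, EU_mixAct_image hC.subset_probCharges hu hf hg]
  have := hC.isCompact.continuous_sInf (f := fun (t : ℝ) p => t * EU u f p + (1 - t) * EU u g p)
    (by have := continuous_EU u f; have := continuous_EU u g; fun_prop)
  exact this.comp continuous_subtype_val

lemma IsPriorSet.continuous_maxEU_mixAct (hD : IsPriorSet D) (hu : IsAffineOn u X)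
    (hf : IsAct X f) (hg : IsAct X g) :
    Continuous fun t : Icc (0 : ℝ) 1 => maxEU u D (mixAct t f g) := by
  simp only [maxEU, EU_mixAct_image hD.subset_probCharges hu hf hg]
  have := hD.isCompact.continuous_sSup (f := fun (t : ℝ) p => t * EU u f p + (1 - t) * EU u g p)
    (by have := continuous_EU u f; have := continuous_EU u g; fun_prop)
  exact this.comp continuous_subtype_val

lemma alphaVal_mixAct_constAct (hC : IsPriorSet C) (hD : IsPriorSet D) (hu : IsAffineOn u X)
    (hf : IsAct X f) {x : V} (hx : x ∈ X) {t : ℝ} (ht : t ∈ Icc (0 : ℝ) 1) :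
    alphaVal u C D α (mixAct t f (constAct S x)) = t * alphaVal u C D α f + (1 - t) * u x := by
  rw [alphaVal, alphaVal, hC.minEU_mixAct_constAct hu hf hx ht,
    hD.maxEU_mixAct_constAct hu hf hx ht]
  ring

lemma continuous_alphaVal_mixAct (hC : IsPriorSet C) (hD : IsPriorSet D) (hu : IsAffineOn u X)
    (hf : IsAct X f) (hg : IsAct X g) :
    Continuous fun t : Icc (0 : ℝ) 1 => alphaVal u C D α (mixAct t f g) :=
  (continuous_const.mul (hC.continuous_minEU_mixAct hu hf hg)).add
    (continuous_const.mul (hD.continuous_maxEU_mixAct hu hf hg))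

end ExpectedUtility

lemma exists_lt_one_mem_of_isOpen {U : Set (Icc (0 : ℝ) 1)} (hU : IsOpen U) (h1 : 1 ∈ U) :
    ∃ t ∈ U, (t : ℝ) < 1 := by
  have hpre : projIcc 0 1 zero_le_one ⁻¹' U ∈ 𝓝[<] (1 : ℝ) :=
    nhdsWithin_le_nhds <| (continuous_projIcc.isOpen_preimage U hU).mem_nhds <| by
      simpa [projIcc_right] using h1
  obtain ⟨t, htU, ht⟩ := Filter.nonempty_of_mem (f := 𝓝[<] (1 : ℝ))
    (inter_mem hpre (Ioo_mem_nhdsLT zero_lt_one))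
  exact ⟨_, htU, by rw [projIcc_of_mem _ (Ioo_subset_Icc_self ht)]; exact ht.2⟩

lemma exists_common_mix {m₁ M₁ m₂ M₂ : ℝ} (h₁ : m₁ < M₁) (h₂ : m₂ < M₂) (c : ℝ) {ε : ℝ}
    (hε : 0 < ε) : ∃ t ∈ Ioo (0 : ℝ) 1, ∃ s ∈ Ioo (0 : ℝ) 1, ∃ b ∈ Icc (c - ε) (c + ε),
      t * m₁ + (1 - t) * c = s * m₂ + (1 - s) * b ∧
      t * M₁ + (1 - t) * c = s * M₂ + (1 - s) * b := by
  -- take `t = r (M₂ - m₂)` and `s = r (M₁ - m₁)` for a small `r > 0`, and solve for `b`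
  set K := (M₂ - m₂) * (m₁ - c) - (M₁ - m₁) * (m₂ - c)
  set b : ℝ → ℝ := fun r => c + r * K / (1 - r * (M₁ - m₁))
  have hb : Tendsto b (𝓝 0) (𝓝 c) := by
    have : ContinuousAt b 0 := by fun_prop (disch := norm_num)
    simpa [b] using this.tendsto
  have hsmall (a : ℝ) : ∀ᶠ r in 𝓝 (0 : ℝ), r * a < 1 := by
    have : ContinuousAt (fun r : ℝ => r * a) 0 := by fun_prop
    exact this.eventually_lt continuousAt_const (by simp)
  have hev : ∀ᶠ r in 𝓝[>] (0 : ℝ), 0 < r ∧ r * (M₂ - m₂) < 1 ∧ r * (M₁ - m₁) < 1 ∧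
      b r ∈ Icc (c - ε) (c + ε) :=
    eventually_mem_nhdsWithin.and <| nhdsWithin_le_nhds <| (hsmall _).and <| (hsmall _).and <|
      hb.eventually (Icc_mem_nhds (by linarith) (by linarith))
  obtain ⟨r, hr, hrt, hrs, hrb⟩ := hev.exists
  have hr₁ : 1 - r * (M₁ - m₁) ≠ 0 := by linarith
  refine ⟨r * (M₂ - m₂), ⟨mul_pos hr (by linarith), hrt⟩, r * (M₁ - m₁),
    ⟨mul_pos hr (by linarith), hrs⟩, b r, hrb, ?_, ?_⟩ <;>
  · simp only [b, K]; field_simp; ring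

section CertaintyEquivalent

variable {S : Type*} [MeasurableSpace S] {V : Type*} {X : Set V} {u : V → ℝ}
  {R : (S → V) → (S → V) → Prop} {f g h : S → V} {e e' : V} {C D : Set (MSet S → ℝ)} {α : ℝ}

def ExtendsHopePrepare (X : Set V) (u : V → ℝ) (C D : Set (MSet S → ℝ))
    (R : (S → V) → (S → V) → Prop) : Prop :=
  ∀ f g, IsAct X f → IsAct X g → minEU u C g < minEU u C f → maxEU u D g < maxEU u D f → R f g

lemma ExtendsHopePrepare.ranksConstantsBy (hext : ExtendsHopePrepare X u C D R)
    (hC : IsPriorSet C) (hD : IsPriorSet D) : RanksConstantsBy X u R := fun x hx y hy hxy =>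
  hext _ _ (isAct_constAct hx) (isAct_constAct hy)
    (by rwa [hC.minEU_constAct, hC.minEU_constAct]) (by rwa [hD.maxEU_constAct, hD.maxEU_constAct])

lemma ExtendsHopePrepare.mem_Icc_of_incomp (hext : ExtendsHopePrepare X u C D R)
    (hC : IsPriorSet C) (hD : IsPriorSet D) (hCD : (C ∩ D).Nonempty) (hf : IsAct X f)
    (he : e ∈ X) (hfe : Incomp R (constAct S e) f) : u e ∈ Icc (minEU u C f) (maxEU u D f) := by
  have hmM : minEU u C f ≤ maxEU u D f := minEU_le_maxEU hC.isCompact hD.isCompact hCD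
  constructor
  · by_contra! h
    exact hfe.2 (hext _ _ hf (isAct_constAct he) (by rwa [hC.minEU_constAct])
      (by rw [hD.maxEU_constAct]; linarith))
  · by_contra! h
    exact hfe.1 (hext _ _ (isAct_constAct he) hf (by rw [hC.minEU_constAct]; linarith)
      (by rwa [hD.maxEU_constAct]))

lemma alphaVal_eq_of_incomp (hC : IsPriorSet C) (hD : IsPriorSet D)
    (hrep : ∀ f g, IsAct X f → IsAct X g → (R f g ↔ alphaVal u C D α g < alphaVal u C D α f))
    (hf : IsAct X f) (he : e ∈ X) (hfe : Incomp R (constAct S e) f) :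
    alphaVal u C D α f = u e := by
  refine le_antisymm (not_lt.1 fun h => hfe.2 ?_) (not_lt.1 fun h => hfe.1 ?_)
  · rwa [hrep _ _ hf (isAct_constAct he), alphaVal_constAct hC hD]
  · rwa [hrep _ _ (isAct_constAct he) hf, alphaVal_constAct hC hD]

lemma extendsHopePrepare_of_alphaVal (hα : α ∈ Icc (0 : ℝ) 1)
    (hrep : ∀ f g, IsAct X f → IsAct X g → (R f g ↔ alphaVal u C D α g < alphaVal u C D α f)) :
    ExtendsHopePrepare X u C D R :=
  fun f g hf hg hmin hmax => (hrep f g hf hg).2 (alphaVal_lt_alphaVal hα hmin hmax)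

variable [AddCommGroup V] [Module ℝ V]

lemma InvBiseparable.asymm (hR : InvBiseparable X R) (hf : IsAct X f) (hg : IsAct X g) :
    R f g → ¬ R g f :=
  hR.1 f g hf hg

lemma InvBiseparable.rel_or_rel (hR : InvBiseparable X R) (hf : IsAct X f) (hg : IsAct X g)
    (hh : IsAct X h) (hfh : R f h) : R f g ∨ R g h := by
  by_contra hc
  rw [not_or] at hc
  exact hR.2.1 f g h hf hg hh hc.1 hc.2 hfh

lemma InvBiseparable.prefAx2 (hR : InvBiseparable X R) : PrefAx2 X R := hR.2.2.1

lemma InvBiseparable.prefAx3 (hR : InvBiseparable X R) : PrefAx3 X R := hR.2.2.2.1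

lemma InvBiseparable.prefAx5 (hR : InvBiseparable X R) : PrefAx5 X R := hR.2.2.2.2

lemma InvBiseparable.flip (hR : InvBiseparable X R) : InvBiseparable X (flip R) :=
  ⟨fun f g hf hg => hR.1 g f hg hf,
    fun f g h hf hg hh hfg hgh => hR.2.1 h g f hh hg hf hgh hfg,
    fun f g h hf hg hh => (hR.prefAx2 f g h hf hg hh).symm,
    fun f g hf hg => hR.prefAx3 g f hg hf, fun f g hf hg => hR.prefAx5 g f hg hf⟩

lemma invBiseparable_of_represents (hX : Convex ℝ X) {W : (S → V) → ℝ}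
    (hW : ∀ f g, IsAct X f → IsAct X g → (R f g ↔ W g < W f))
    (hconst : ∀ x ∈ X, W (constAct S x) = u x)
    (hmix : ∀ f, IsAct X f → ∀ x ∈ X, ∀ t ∈ Icc (0 : ℝ) 1,
      W (mixAct t f (constAct S x)) = t * W f + (1 - t) * u x)
    (hcont : ∀ f g, IsAct X f → IsAct X g → Continuous fun t : Icc (0 : ℝ) 1 => W (mixAct t f g))
    (hmono : ∀ f g, IsAct X f → IsAct X g → (∀ s, u (g s) < u (f s)) → W g < W f) :
    InvBiseparable X R := by
  refine ⟨fun f g hf hg hfg => ?_, fun f g h hf hg hh hfg hgh => ?_, fun f g h hf hg hh => ?_,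
    fun f g hf hg x hx t ht₀ ht₁ => ?_, fun f g hf hg hfg => ?_⟩
  · rw [hW f g hf hg] at hfg
    rw [hW g f hg hf]
    exact hfg.asymm
  · rw [hW f g hf hg, not_lt] at hfg
    rw [hW g h hg hh, not_lt] at hgh
    rw [hW f h hf hh, not_lt]
    exact hfg.trans hgh
  · have hmem (t : Icc (0 : ℝ) 1) := hf.mixAct hX hg t.2
    constructor
    · convert (hcont f g hf hg).isOpen_preimage _ (isOpen_Ioi (a := W h)) using 1
      ext t; exact hW _ _ (hmem t) hh
    · convert (hcont f g hf hg).isOpen_preimage _ (isOpen_Iio (a := W h)) using 1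
      ext t; exact hW _ _ hh (hmem t)
  · have ht : t ∈ Icc (0 : ℝ) 1 := ⟨ht₀.le, ht₁.le⟩
    have hx' := isAct_constAct (S := S) hx
    rw [hW f g hf hg, hW _ _ (hf.mixAct hX hx' ht) (hg.mixAct hX hx' ht),
      hmix f hf x hx t ht, hmix g hg x hx t ht, add_lt_add_iff_right, mul_lt_mul_iff_right₀ ht₀]
  · refine (hW f g hf hg).2 (hmono f g hf hg fun s => ?_)
    have := (hW _ _ (isAct_constAct (hf.1 s)) (isAct_constAct (hg.1 s))).1 (hfg s)
    rwa [hconst _ (hf.1 s), hconst _ (hg.1 s)] at this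

lemma invBiseparable_of_alphaVal [Nonempty S] (hX : Convex ℝ X) (hu : IsAffineOn u X)
    (hC : IsPriorSet C) (hD : IsPriorSet D) (hα : α ∈ Icc (0 : ℝ) 1)
    (hrep : ∀ f g, IsAct X f → IsAct X g → (R f g ↔ alphaVal u C D α g < alphaVal u C D α f)) :
    InvBiseparable X R :=
  invBiseparable_of_represents hX hrep (fun x _ => alphaVal_constAct hC hD x)
    (fun _ hf _ hx _ ht => alphaVal_mixAct_constAct hC hD hu hf hx ht)
    (fun _ _ hf hg => continuous_alphaVal_mixAct hC hD hu hf hg)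
    (fun _ _ hf hg h => alphaVal_lt_alphaVal_of_lt hC hD hα hf hg h)

lemma InvBiseparable.not_rel_constAct_of_le (hX : Convex ℝ X) (hu : IsAffineOn u X)
    (hnc : NonConstOn u X) (hR : InvBiseparable X R) (hcu : RanksConstantsBy X u R)
    (hf : IsAct X f) {x : V} (hx : x ∈ X) (hle : ∀ s, u (f s) ≤ u x) :
    ¬ R f (constAct S x) := by
  intro hfx
  have hx' := isAct_constAct (S := S) hx
  obtain ⟨z, hz, hzx⟩ := hnc.exists_ne x
  have hz' := isAct_constAct (S := S) hz
  rcases hzx.lt_or_gt with hzx | hxz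
  · -- by continuity some mixture of `f` with the worse `z` is still above `x`,
    -- although it is below `x` in every state
    obtain ⟨t, ht, ht₁⟩ := exists_lt_one_mem_of_isOpen (hR.prefAx2 f _ _ hf hz' hx').1
      (by simpa [mixAct_one] using hfx)
    have hmix := hf.mixAct hX hz' t.2
    refine hR.asymm hmix hx' ht (hR.prefAx5 _ _ hx' hmix fun s => hcu _ hx _ (hmix.1 s) ?_)
    change u (t.1 • f s + (1 - t.1) • z) < u x
    rw [hu _ (hf.1 s) _ hz _ t.2.1 t.2.2]
    nlinarith [hle s, t.2.1]
  · -- by continuity `f` is still above some mixture of `x` with the better `z`,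
    -- although that constant is better than `f` in every state
    obtain ⟨t, ht, ht₁⟩ := exists_lt_one_mem_of_isOpen (hR.prefAx2 _ _ f hx' hz' hf).2
      (by simpa [mixAct_one] using hfx)
    have hw : t.1 • x + (1 - t.1) • z ∈ X := hX hx hz t.2.1 (by linarith [t.2.2]) (by ring)
    have hw' := isAct_constAct (S := S) hw
    refine hR.asymm hf hw' ht (hR.prefAx5 _ _ hw' hf fun s => hcu _ hw _ (hf.1 s) ?_)
    rw [hu _ hx _ hz _ t.2.1 t.2.2]
    nlinarith [hle s, t.2.1]

lemma InvBiseparable.not_constAct_rel_of_le (hX : Convex ℝ X) (hu : IsAffineOn u X)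
    (hnc : NonConstOn u X) (hR : InvBiseparable X R) (hcu : RanksConstantsBy X u R)
    (hf : IsAct X f) {x : V} (hx : x ∈ X) (hle : ∀ s, u x ≤ u (f s)) :
    ¬ R (constAct S x) f :=
  hR.flip.not_rel_constAct_of_le hX hu.neg hnc.neg hcu.flip hf hx fun s => neg_le_neg (hle s)

lemma InvBiseparable.exists_incomp_constAct [Nonempty S] (hX : Convex ℝ X)
    (hu : IsAffineOn u X) (hnc : NonConstOn u X) (hR : InvBiseparable X R)
    (hcu : RanksConstantsBy X u R) (hf : IsAct X f) : ∃ e ∈ X, Incomp R (constAct S e) f := by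
  obtain ⟨_, ⟨s₀, rfl⟩, hs₀⟩ := exists_min_image (range f) u hf.2.1 (range_nonempty f)
  obtain ⟨_, ⟨s₁, rfl⟩, hs₁⟩ := exists_max_image (range f) u hf.2.1 (range_nonempty f)
  have hlo := isAct_constAct (S := S) (hf.1 s₀)
  have hhi := isAct_constAct (S := S) (hf.1 s₁)
  have hw (t : Icc (0 : ℝ) 1) : t.1 • f s₁ + (1 - t.1) • f s₀ ∈ X :=
    hX (hf.1 s₁) (hf.1 s₀) t.2.1 (by linarith [t.2.2]) (by ring)
  by_contra! hne
  -- on the segment from the worst to the best outcome of `f`, the constants better than `f`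
  -- and those worse than `f` would form two disjoint open sets covering it
  have hcover (t : Icc (0 : ℝ) 1) :
      R (constAct S (t.1 • f s₁ + (1 - t.1) • f s₀)) f ∨
        R f (constAct S (t.1 • f s₁ + (1 - t.1) • f s₀)) := by
    have := hne _ (hw t)
    unfold Incomp at this
    tauto
  have h₁ : R (constAct S (f s₁)) f := by
    simpa using (hcover 1).resolve_right (by
      simpa using hR.not_rel_constAct_of_le hX hu hnc hcu hf (hf.1 s₁) fun s => hs₁ _ ⟨s, rfl⟩)
  have h₀ : R f (constAct S (f s₀)) := by
    simpa using (hcover 0).resolve_left (by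
      simpa using hR.not_constAct_rel_of_le hX hu hnc hcu hf (hf.1 s₀) fun s => hs₀ _ ⟨s, rfl⟩)
  obtain ⟨t, -, htP, htQ⟩ := isPreconnected_univ _ _ (hR.prefAx2 _ _ f hhi hlo hf).1
    (hR.prefAx2 _ _ f hhi hlo hf).2 (fun t _ => hcover t)
    ⟨1, trivial, by simpa [mixAct_constAct] using h₁⟩
    ⟨0, trivial, by simpa [mixAct_constAct] using h₀⟩
  exact hR.asymm (isAct_constAct (hw t)) hf htP htQ

lemma InvBiseparable.rel_iff_of_incomp (hX : Convex ℝ X) (hu : IsAffineOn u X)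
    (hnc : NonConstOn u X) (hR : InvBiseparable X R) (hcu : RanksConstantsBy X u R)
    (hf : IsAct X f) (hg : IsAct X g) (he : e ∈ X) (he' : e' ∈ X)
    (hfe : Incomp R (constAct S e) f) (hge : Incomp R (constAct S e') g) :
    R f g ↔ u e' < u e := by
  have hce := isAct_constAct (S := S) he
  have hce' := isAct_constAct (S := S) he'
  constructor
  · intro hfg
    by_contra! hle
    have hfe' : R f (constAct S e') := (hR.rel_or_rel hf hce' hg hfg).resolve_right hge.1
    have hee' : R (constAct S e) (constAct S e') :=
      (hR.rel_or_rel hf hce hce' hfe').resolve_left hfe.2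
    exact hR.not_rel_constAct_of_le hX hu hnc hcu hce he' (fun _ => hle) hee'
  · intro hlt
    have hef : R f (constAct S e') :=
      (hR.rel_or_rel hce hf hce' (hcu _ he _ he' hlt)).resolve_left hfe.1
    exact (hR.rel_or_rel hf hg hce' hef).resolve_right hge.2

lemma InvBiseparable.incomp_mixAct_constAct (hR : InvBiseparable X R) (hf : IsAct X f)
    (he : e ∈ X) (hfe : Incomp R (constAct S e) f) {x : V} (hx : x ∈ X) {t : ℝ}
    (ht : t ∈ Ioo (0 : ℝ) 1) :
    Incomp R (constAct S (t • e + (1 - t) • x)) (mixAct t f (constAct S x)) := by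
  rw [← mixAct_constAct]
  have hce := isAct_constAct (S := S) he
  exact ⟨mt (hR.prefAx3 _ _ hce hf x hx t ht.1 ht.2).2 hfe.1,
    mt (hR.prefAx3 _ _ hf hce x hx t ht.1 ht.2).2 hfe.2⟩

lemma ExtendsHopePrepare.le_of_incomp (hX : Convex ℝ X) (hu : IsAffineOn u X)
    (hnc : NonConstOn u X) (hR : InvBiseparable X R) (hext : ExtendsHopePrepare X u C D R)
    (hC : IsPriorSet C) (hD : IsPriorSet D) (hf : IsAct X f) (hg : IsAct X g) (he : e ∈ X)
    (he' : e' ∈ X) (hfe : Incomp R (constAct S e) f) (hge : Incomp R (constAct S e') g)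
    (hmin : minEU u C f ≤ minEU u C g) (hmax : maxEU u D f ≤ maxEU u D g) : u e ≤ u e' := by
  by_contra! hlt
  obtain ⟨x₀, hx₀, x₁, hx₁, h₀₁⟩ := hnc.exists_lt
  -- mixing `f` with the worse `x₀` and `g` with the better `x₁` at this weight makes the mixtures
  -- exactly indifferent, though `g`'s mixture is strictly better in the hope-and-prepare sense
  set t := (u x₁ - u x₀) / (u x₁ - u x₀ + (u e - u e')) with ht_def
  have ht : t ∈ Ioo (0 : ℝ) 1 :=
    ⟨div_pos (by linarith) (by linarith), (div_lt_one (by linarith)).2 (by linarith)⟩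
  have ht' : t ∈ Icc (0 : ℝ) 1 := Ioo_subset_Icc_self ht
  have hF := hf.mixAct hX (isAct_constAct (S := S) hx₀) ht'
  have hG := hg.mixAct hX (isAct_constAct (S := S) hx₁) ht'
  have hGF := hext _ _ hG hF
    (by rw [hC.minEU_mixAct_constAct hu hf hx₀ ht', hC.minEU_mixAct_constAct hu hg hx₁ ht']
        nlinarith [ht.1, ht.2])
    (by rw [hD.maxEU_mixAct_constAct hu hf hx₀ ht', hD.maxEU_mixAct_constAct hu hg hx₁ ht']
        nlinarith [ht.1, ht.2])
  have hcu := hext.ranksConstantsBy hC hD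
  rw [hR.rel_iff_of_incomp hX hu hnc hcu hG hF (hX he' hx₁ ht'.1 (by linarith [ht.2]) (by ring))
    (hX he hx₀ ht'.1 (by linarith [ht.2]) (by ring)) (hR.incomp_mixAct_constAct hg he' hge hx₁ ht)
    (hR.incomp_mixAct_constAct hf he hfe hx₀ ht), hu _ he _ hx₀ _ ht'.1 ht'.2,
    hu _ he' _ hx₁ _ ht'.1 ht'.2] at hGF
  have hden : u x₁ - u x₀ + (u e - u e') ≠ 0 := by linarith
  have hkey : t * (u e - u e') = (1 - t) * (u x₁ - u x₀) := by
    rw [ht_def]; field_simp; ring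
  linarith

lemma ExtendsHopePrepare.gap_mul_eq_of_incomp (hX : Convex ℝ X) (hu : IsAffineOn u X)
    (hnc : NonConstOn u X) (hR : InvBiseparable X R) (hext : ExtendsHopePrepare X u C D R)
    (hC : IsPriorSet C) (hD : IsPriorSet D) (hCD : (C ∩ D).Nonempty) (hf : IsAct X f)
    (hg : IsAct X g) (he : e ∈ X) (he' : e' ∈ X) (hfe : Incomp R (constAct S e) f)
    (hge : Incomp R (constAct S e') g) :
    (maxEU u D f - u e) * (maxEU u D g - minEU u C g)
      = (maxEU u D g - u e') * (maxEU u D f - minEU u C f) := by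
  have hfI := hext.mem_Icc_of_incomp hC hD hCD hf he hfe
  have hgI := hext.mem_Icc_of_incomp hC hD hCD hg he' hge
  rcases (hfI.1.trans hfI.2).eq_or_lt with hfeq | hflt
  · rw [le_antisymm hfI.2 (hfeq ▸ hfI.1), hfeq]; ring
  rcases (hgI.1.trans hgI.2).eq_or_lt with hgeq | hglt
  · rw [le_antisymm hgI.2 (hgeq ▸ hgI.1), hgeq]; ring
  -- mix `f` and `g` with constants so that their hope-and-prepare values coincide
  obtain ⟨x₀, hx₀, x₁, hx₁, h₀₁⟩ := hnc.exists_lt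
  obtain ⟨t, ht, s, hs, b, hb, hmin, hmax⟩ :=
    exists_common_mix hflt hglt ((u x₀ + u x₁) / 2) (ε := (u x₁ - u x₀) / 2) (by linarith)
  obtain ⟨a, ha, hua⟩ := hu.exists_eq hX hx₀ hx₁ (r := (u x₀ + u x₁) / 2)
    ⟨by linarith, by linarith⟩
  obtain ⟨c, hc, huc⟩ := hu.exists_eq hX hx₀ hx₁ (r := b) ⟨by linarith [hb.1], by linarith [hb.2]⟩
  rw [← hua, ← huc] at hmin hmax
  have ht' := Ioo_subset_Icc_self ht
  have hs' := Ioo_subset_Icc_self hs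
  have hF := hf.mixAct hX (isAct_constAct (S := S) ha) ht'
  have hG := hg.mixAct hX (isAct_constAct (S := S) hc) hs'
  have hFe := hR.incomp_mixAct_constAct hf he hfe ha ht
  have hGe := hR.incomp_mixAct_constAct hg he' hge hc hs
  have hmin' : minEU u C (mixAct t f (constAct S a)) = minEU u C (mixAct s g (constAct S c)) := by
    rw [hC.minEU_mixAct_constAct hu hf ha ht', hC.minEU_mixAct_constAct hu hg hc hs', hmin]
  have hmax' : maxEU u D (mixAct t f (constAct S a)) = maxEU u D (mixAct s g (constAct S c)) := by
    rw [hD.maxEU_mixAct_constAct hu hf ha ht', hD.maxEU_mixAct_constAct hu hg hc hs', hmax]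
  have hea : t • e + (1 - t) • a ∈ X := hX he ha ht'.1 (by linarith [ht'.2]) (by ring)
  have hec : s • e' + (1 - s) • c ∈ X := hX he' hc hs'.1 (by linarith [hs'.2]) (by ring)
  have hval := le_antisymm
    (hext.le_of_incomp hX hu hnc hR hC hD hF hG hea hec hFe hGe hmin'.le hmax'.le)
    (hext.le_of_incomp hX hu hnc hR hC hD hG hF hec hea hGe hFe hmin'.ge hmax'.ge)
  rw [hu _ he _ ha _ ht'.1 ht'.2, hu _ he' _ hc _ hs'.1 hs'.2] at hval
  refine mul_left_cancel₀ (mul_pos ht.1 hs.1).ne' ?_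
  linear_combination (s * (maxEU u D g - minEU u C g)) * (hmax - hval)
    - (s * (maxEU u D g - u e')) * (hmax - hmin)

lemma ExtendsHopePrepare.exists_alphaVal [Nonempty S] (hX : Convex ℝ X) (hu : IsAffineOn u X)
    (hnc : NonConstOn u X) (hR : InvBiseparable X R) (hext : ExtendsHopePrepare X u C D R)
    (hC : IsPriorSet C) (hD : IsPriorSet D) (hCD : (C ∩ D).Nonempty) :
    ∃ α ∈ Icc (0 : ℝ) 1, ∀ f g, IsAct X f → IsAct X g →
      (R f g ↔ alphaVal u C D α g < alphaVal u C D α f) := by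
  have hcu := hext.ranksConstantsBy hC hD
  choose! e he hfe using fun f (hf : IsAct X f) => hR.exists_incomp_constAct hX hu hnc hcu hf
  suffices ∃ α ∈ Icc (0 : ℝ) 1, ∀ f, IsAct X f → u (e f) = alphaVal u C D α f by
    obtain ⟨α, hα, hval⟩ := this
    refine ⟨α, hα, fun f g hf hg => ?_⟩
    rw [hR.rel_iff_of_incomp hX hu hnc hcu hf hg (he f hf) (he g hg) (hfe f hf) (hfe g hg),
      hval f hf, hval g hg]
  by_cases hgap : ∃ h, IsAct X h ∧ minEU u C h < maxEU u D h
  · obtain ⟨h, hh, hlt⟩ := hgap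
    have hI := hext.mem_Icc_of_incomp hC hD hCD hh (he h hh) (hfe h hh)
    have hpos : 0 < maxEU u D h - minEU u C h := by linarith
    refine ⟨(maxEU u D h - u (e h)) / (maxEU u D h - minEU u C h),
      ⟨div_nonneg (by linarith [hI.2]) hpos.le, (div_le_one hpos).2 (by linarith [hI.1])⟩,
      fun f hf => ?_⟩
    have := hext.gap_mul_eq_of_incomp hX hu hnc hR hC hD hCD hf hh (he f hf) (he h hh)
      (hfe f hf) (hfe h hh)
    rw [alphaVal]
    field_simp
    linear_combination -this
  · simp only [not_exists, not_and, not_lt] at hgap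
    refine ⟨0, ⟨le_rfl, zero_le_one⟩, fun f hf => ?_⟩
    have hI := hext.mem_Icc_of_incomp hC hD hCD hf (he f hf) (hfe f hf)
    rw [alphaVal, zero_mul, zero_add, sub_zero, one_mul]
    exact le_antisymm hI.2 ((hgap f hf).trans hI.1)

end CertaintyEquivalent

section Statement

variable {S : Type*} [MeasurableSpace S] [Nonempty S]
variable {V : Type*} [AddCommGroup V] [Module ℝ V]

theorem statement2_general (X : Set V) (hX : Convex ℝ X)
    (R Rstar : (S → V) → (S → V) → Prop) (u : V → ℝ) (C D : Set (MSet S → ℝ))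
    (hrep : IsHPRep X R u C D) :
    ((InvBiseparable X Rstar ∧
        (∀ f g, IsAct X f → IsAct X g → R f g → Rstar f g)) ↔
      ∃ α ∈ Set.Icc (0 : ℝ) 1, ∀ f g, IsAct X f → IsAct X g →
        (Rstar f g ↔ alphaVal u C D α g < alphaVal u C D α f)) ∧
    ((∃ f, IsAct X f ∧ minEU u C f < maxEU u D f) →
      ∀ α ∈ Set.Icc (0 : ℝ) 1, ∀ β ∈ Set.Icc (0 : ℝ) 1,
        (∀ f g, IsAct X f → IsAct X g →
          (Rstar f g ↔ alphaVal u C D α g < alphaVal u C D α f)) →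
        (∀ f g, IsAct X f → IsAct X g →
          (Rstar f g ↔ alphaVal u C D β g < alphaVal u C D β f)) →
        α = β) := by
  obtain ⟨hu, hnc, hC₀, hD₀, hCP, hDP, hCc, hDc, -, -, hCD, hR⟩ := hrep
  have hC : IsPriorSet C := ⟨hC₀, hCP, hCc⟩
  have hD : IsPriorSet D := ⟨hD₀, hDP, hDc⟩
  have hextends : (∀ f g, IsAct X f → IsAct X g → R f g → Rstar f g) ↔
      ExtendsHopePrepare X u C D Rstar :=
    ⟨fun hext f g hf hg hmin hmax => hext f g hf hg ((hR f g hf hg).2 ⟨hmin, hmax⟩),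
      fun hext f g hf hg hfg => hext f g hf hg ((hR f g hf hg).1 hfg).1 ((hR f g hf hg).1 hfg).2⟩
  rw [hextends]
  refine ⟨⟨fun ⟨hIB, hext⟩ => hext.exists_alphaVal hX hu hnc hIB hC hD hCD,
    fun ⟨α, hα, hrepα⟩ => ⟨invBiseparable_of_alphaVal hX hu hC hD hα hrepα,
      extendsHopePrepare_of_alphaVal hα hrepα⟩⟩, ?_⟩
  rintro ⟨f, hf, hgap⟩ α hα β - hrepα hrepβ
  obtain ⟨e, he, hfe⟩ := (invBiseparable_of_alphaVal hX hu hC hD hα hrepα).exists_incomp_constAct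
    hX hu hnc ((extendsHopePrepare_of_alphaVal hα hrepα).ranksConstantsBy hC hD) hf
  exact eq_of_alphaVal_eq hgap ((alphaVal_eq_of_incomp hC hD hrepα hf he hfe).trans
    (alphaVal_eq_of_incomp hC hD hrepβ hf he hfe).symm)

/-- Theorem 3: `≻*` is an invariant biseparable extension of
the hope-and-prepare preference `≻` iff it admits an asymmetric `α`-MEU
representation `(u, C, D, α)`; and if `≻` is not complete, `α` is unique. -/
theorem statement2 (X : Set V) (hX : Convex ℝ X) (hX2 : ∃ x ∈ X, ∃ y ∈ X, x ≠ y)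
    (R Rstar : (S → V) → (S → V) → Prop) (u : V → ℝ) (C D : Set (MSet S → ℝ))
    (hrep : IsHPRep X R u C D) :
    ((InvBiseparable X Rstar ∧
        (∀ f g, IsAct X f → IsAct X g → R f g → Rstar f g)) ↔
      ∃ α ∈ Set.Icc (0 : ℝ) 1, ∀ f g, IsAct X f → IsAct X g →
        (Rstar f g ↔ alphaVal u C D α g < alphaVal u C D α f)) ∧
    ((∃ f, IsAct X f ∧ minEU u C f < maxEU u D f) →
      ∀ α ∈ Set.Icc (0 : ℝ) 1, ∀ β ∈ Set.Icc (0 : ℝ) 1,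
        (∀ f g, IsAct X f → IsAct X g →
          (Rstar f g ↔ alphaVal u C D α g < alphaVal u C D α f)) →
        (∀ f g, IsAct X f → IsAct X g →
          (Rstar f g ↔ alphaVal u C D β g < alphaVal u C D β f)) →
        α = β) :=
  statement2_general X hX R Rstar u C D hrep

end Statement
end
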